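/- arXiv:2412.06058 — 6 statements merged into one kernel-verified Lean document; each statement's English description precedes it below -/
import Mathlib

section
/- There exists ε > 0 such that P(t) is invertible for all t ∈ (0, ε), and the m×m block (L(t))_{mm} of L(t) satisfies lim_{t→0⁺} ( (L(t))_{mm} + (ℓ/(2t))·A₁ ) = −(ℓ + 1)·A(0) − (1/4)·tr(A₀⁻¹A₁)·A₁ + (1/2)·A₁A₀⁻¹A₁ + 2·C₀C₀ᵗ. (In particular L(t)_{mm} has a singular term of order t⁻¹ unless A₁ = 0.) -/
open Matrix Set Filter Topology

section Helpers
variable {α : Type*} {l : Filter α} {n p q : Type*} [Fintype n] [Fintype p] [Fintype q]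

lemma tendsto_mat_entry {f : α → Matrix n p ℝ} {F : Matrix n p ℝ}
    (h : Tendsto f l (𝓝 F)) (i : n) (j : p) :
    Tendsto (fun a => f a i j) l (𝓝 (F i j)) := by
  have : Continuous fun M : Matrix n p ℝ => M i j := (continuous_apply j).comp (continuous_apply i)
  exact (this.tendsto F).comp h

lemma tendsto_mat_of_entries {f : α → Matrix n p ℝ} {F : Matrix n p ℝ}
    (h : ∀ i j, Tendsto (fun a => f a i j) l (𝓝 (F i j))) :
    Tendsto f l (𝓝 F) :=
  tendsto_pi_nhds.2 fun i => tendsto_pi_nhds.2 fun j => h i j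

lemma Filter.Tendsto.matmul {f : α → Matrix n p ℝ} {g : α → Matrix p q ℝ}
    {F : Matrix n p ℝ} {G : Matrix p q ℝ}
    (hf : Tendsto f l (𝓝 F)) (hg : Tendsto g l (𝓝 G)) :
    Tendsto (fun a => f a * g a) l (𝓝 (F * G)) := by
  refine tendsto_mat_of_entries fun i j => ?_
  simp only [Matrix.mul_apply]
  exact tendsto_finset_sum _ fun k _ => (tendsto_mat_entry hf i k).mul (tendsto_mat_entry hg k j)

lemma Filter.Tendsto.matsmul {c : α → ℝ} {f : α → Matrix n p ℝ} {c₀ : ℝ} {F : Matrix n p ℝ}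
    (hc : Tendsto c l (𝓝 c₀)) (hf : Tendsto f l (𝓝 F)) :
    Tendsto (fun a => c a • f a) l (𝓝 (c₀ • F)) := by
  refine tendsto_mat_of_entries fun i j => ?_
  simpa [Matrix.smul_apply, smul_eq_mul] using hc.mul (tendsto_mat_entry hf i j)

lemma Filter.Tendsto.mattrace {f : α → Matrix n n ℝ} {F : Matrix n n ℝ}
    (hf : Tendsto f l (𝓝 F)) :
    Tendsto (fun a => (f a).trace) l (𝓝 F.trace) := by
  simp only [Matrix.trace, Matrix.diag]
  exact tendsto_finset_sum _ fun k _ => tendsto_mat_entry hf k k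

lemma Filter.Tendsto.mattranspose {f : α → Matrix n p ℝ} {F : Matrix n p ℝ}
    (hf : Tendsto f l (𝓝 F)) :
    Tendsto (fun a => (f a)ᵀ) l (𝓝 Fᵀ) :=
  tendsto_mat_of_entries fun i j => tendsto_mat_entry hf j i

lemma tendsto_fromBlocks {f₁₁ : α → Matrix n n ℝ} {f₁₂ : α → Matrix n p ℝ}
    {f₂₁ : α → Matrix p n ℝ} {f₂₂ : α → Matrix p p ℝ}
    {F₁₁ F₁₂ F₂₁ F₂₂}
    (h₁₁ : Tendsto f₁₁ l (𝓝 F₁₁)) (h₁₂ : Tendsto f₁₂ l (𝓝 F₁₂))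
    (h₂₁ : Tendsto f₂₁ l (𝓝 F₂₁)) (h₂₂ : Tendsto f₂₂ l (𝓝 F₂₂)) :
    Tendsto (fun a => Matrix.fromBlocks (f₁₁ a) (f₁₂ a) (f₂₁ a) (f₂₂ a)) l
      (𝓝 (Matrix.fromBlocks F₁₁ F₁₂ F₂₁ F₂₂)) := by
  refine tendsto_mat_of_entries fun i j => ?_
  cases i <;> cases j <;>
    simp only [Matrix.fromBlocks, Matrix.of_apply, Sum.elim_inl, Sum.elim_inr] <;>
    [exact tendsto_mat_entry h₁₁ _ _; exact tendsto_mat_entry h₁₂ _ _;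
     exact tendsto_mat_entry h₂₁ _ _; exact tendsto_mat_entry h₂₂ _ _]

lemma tendsto_toBlocks₁₁ {f : α → Matrix (n ⊕ p) (n ⊕ p) ℝ} {F}
    (hf : Tendsto f l (𝓝 F)) : Tendsto (fun a => (f a).toBlocks₁₁) l (𝓝 F.toBlocks₁₁) :=
  tendsto_mat_of_entries fun _ _ => tendsto_mat_entry hf _ _

lemma tendsto_toBlocks₁₂ {f : α → Matrix (n ⊕ p) (n ⊕ p) ℝ} {F}
    (hf : Tendsto f l (𝓝 F)) : Tendsto (fun a => (f a).toBlocks₁₂) l (𝓝 F.toBlocks₁₂) :=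
  tendsto_mat_of_entries fun _ _ => tendsto_mat_entry hf _ _

lemma tendsto_toBlocks₂₁ {f : α → Matrix (n ⊕ p) (n ⊕ p) ℝ} {F}
    (hf : Tendsto f l (𝓝 F)) : Tendsto (fun a => (f a).toBlocks₂₁) l (𝓝 F.toBlocks₂₁) :=
  tendsto_mat_of_entries fun _ _ => tendsto_mat_entry hf _ _

lemma tendsto_toBlocks₂₂ {f : α → Matrix (n ⊕ p) (n ⊕ p) ℝ} {F}
    (hf : Tendsto f l (𝓝 F)) : Tendsto (fun a => (f a).toBlocks₂₂) l (𝓝 F.toBlocks₂₂) :=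
  tendsto_mat_of_entries fun _ _ => tendsto_mat_entry hf _ _

lemma trace_fromBlocks' (A : Matrix n n ℝ) (B : Matrix n p ℝ) (C : Matrix p n ℝ)
    (D : Matrix p p ℝ) : (Matrix.fromBlocks A B C D).trace = A.trace + D.trace := by
  simp [Matrix.trace, Matrix.diag, Fintype.sum_sum_type, Matrix.fromBlocks]

lemma tendsto_mat_inv [DecidableEq n] {f : α → Matrix n n ℝ} {F : Matrix n n ℝ}
    (hf : Tendsto f l (𝓝 F)) (hF : IsUnit F.det) :
    Tendsto (fun a => (f a)⁻¹) l (𝓝 F⁻¹) := by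
  have hc : ContinuousAt Inv.inv F := by
    apply continuousAt_matrix_inv
    rw [Ring.inverse_eq_inv']
    exact continuousAt_inv₀ (by simpa [isUnit_iff_ne_zero] using hF)
  exact hc.tendsto.comp hf

variable {o r : Type*}

lemma toBlocks₂₂_add (M N : Matrix (n ⊕ p) (o ⊕ r) ℝ) :
    (M + N).toBlocks₂₂ = M.toBlocks₂₂ + N.toBlocks₂₂ := rfl

lemma toBlocks₂₂_sub (M N : Matrix (n ⊕ p) (o ⊕ r) ℝ) :
    (M - N).toBlocks₂₂ = M.toBlocks₂₂ - N.toBlocks₂₂ := rfl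

lemma toBlocks₂₂_smul (c : ℝ) (M : Matrix (n ⊕ p) (o ⊕ r) ℝ) :
    (c • M).toBlocks₂₂ = c • M.toBlocks₂₂ := rfl

lemma toBlocks₁₁_sub (M N : Matrix (n ⊕ p) (o ⊕ r) ℝ) :
    (M - N).toBlocks₁₁ = M.toBlocks₁₁ - N.toBlocks₁₁ := rfl

lemma toBlocks₁₁_smul (c : ℝ) (M : Matrix (n ⊕ p) (o ⊕ r) ℝ) :
    (c • M).toBlocks₁₁ = c • M.toBlocks₁₁ := rfl

end Helpers

set_option maxHeartbeats 4000000 in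
/-- The mm-block of the shape-operator-type expression
`L(t) = -(1/4) tr(P⁻¹P')·P' + (1/2) P'P⁻¹P' - (1/2) P''` satisfies
`lim_{t→0⁺} ( L(t)_{mm} + (ℓ/(2t))·A₁ )
  = -(ℓ+1)·A(0) - (1/4)·tr(A₀⁻¹A₁)·A₁ + (1/2)·A₁A₀⁻¹A₁ + 2·C₀C₀ᵀ`,
with `P(t)` invertible for small `t > 0`. -/
theorem mm_block_second_fundamental_form_limit
    (ℓ m : ℕ) (hℓ : 1 ≤ ℓ) (hm : 1 ≤ m)
    (A₀ A₁ : Matrix (Fin m) (Fin m) ℝ)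
    (C₀ : Matrix (Fin m) (Fin ℓ) ℝ)
    (hA₀pd : A₀.PosDef) (hA₀s : A₀.IsSymm) (hA₁s : A₁.IsSymm)
    (A : ℝ → Matrix (Fin m) (Fin m) ℝ)
    (B : ℝ → Matrix (Fin ℓ) (Fin ℓ) ℝ)
    (C : ℝ → Matrix (Fin m) (Fin ℓ) ℝ)
    (δ : ℝ) (hδ : 0 < δ)
    (hA : ∀ i j, ContDiffOn ℝ (⊤ : ℕ∞) (fun t => A t i j) (Ioo (-δ) δ))
    (hB : ∀ i j, ContDiffOn ℝ (⊤ : ℕ∞) (fun t => B t i j) (Ioo (-δ) δ))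
    (hC : ∀ i j, ContDiffOn ℝ (⊤ : ℕ∞) (fun t => C t i j) (Ioo (-δ) δ))
    (hAs : ∀ t, (A t).IsSymm) (hBs : ∀ t, (B t).IsSymm)
    (P : ℝ → Matrix (Fin ℓ ⊕ Fin m) (Fin ℓ ⊕ Fin m) ℝ)
    (hP : ∀ t, P t = Matrix.fromBlocks
        (t ^ 2 • (1 : Matrix (Fin ℓ) (Fin ℓ) ℝ) + t ^ 4 • B t)
        (t ^ 2 • C₀ + t ^ 3 • C t)ᵀ
        (t ^ 2 • C₀ + t ^ 3 • C t)
        (A₀ + t • A₁ + t ^ 2 • A t))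
    (P' P'' : ℝ → Matrix (Fin ℓ ⊕ Fin m) (Fin ℓ ⊕ Fin m) ℝ)
    (hP' : ∀ t u v, P' t u v = deriv (fun s => P s u v) t)
    (hP'' : ∀ t u v, P'' t u v = deriv (fun s => P' s u v) t)
    (L : ℝ → Matrix (Fin ℓ ⊕ Fin m) (Fin ℓ ⊕ Fin m) ℝ)
    (hL : ∀ t, L t = (-(1 / 4 : ℝ) * Matrix.trace ((P t)⁻¹ * P' t)) • P' t
        + (1 / 2 : ℝ) • (P' t * (P t)⁻¹ * P' t) - (1 / 2 : ℝ) • P'' t) :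
    ∃ ε > (0 : ℝ), (∀ t ∈ Ioo (0 : ℝ) ε, IsUnit (P t)) ∧
      Tendsto (fun t : ℝ => (L t).toBlocks₂₂ + ((ℓ : ℝ) / (2 * t)) • A₁)
        (𝓝[>] (0 : ℝ))
        (𝓝 (-(((ℓ : ℝ) + 1) • A 0)
            - ((1 / 4 : ℝ) * Matrix.trace (A₀⁻¹ * A₁)) • A₁
            + (1 / 2 : ℝ) • (A₁ * A₀⁻¹ * A₁)
            + (2 : ℝ) • (C₀ * C₀ᵀ))) := by
  classical
  have hI : IsOpen (Ioo (-δ) δ) := isOpen_Ioo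
  have h0I : (0 : ℝ) ∈ Ioo (-δ) δ := ⟨by linarith, hδ⟩
  -- entrywise derivatives
  set dA : ℝ → Matrix (Fin m) (Fin m) ℝ :=
    fun t => Matrix.of fun i j => deriv (fun s => A s i j) t with hdA_def
  set dB : ℝ → Matrix (Fin ℓ) (Fin ℓ) ℝ :=
    fun t => Matrix.of fun i j => deriv (fun s => B s i j) t with hdB_def
  set dC : ℝ → Matrix (Fin m) (Fin ℓ) ℝ :=
    fun t => Matrix.of fun i j => deriv (fun s => C s i j) t with hdC_def
  set d2A : ℝ → Matrix (Fin m) (Fin m) ℝ :=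
    fun t => Matrix.of fun i j => deriv (fun s => dA s i j) t with hd2A_def
  have htop : ((⊤ : ℕ∞) : WithTop ℕ∞) + 1 ≤ ((⊤ : ℕ∞) : WithTop ℕ∞) := by simp
  have hdA : ∀ i j, ContDiffOn ℝ (⊤ : ℕ∞) (fun t => dA t i j) (Ioo (-δ) δ) := fun i j => by
    simpa [hdA_def] using (hA i j).deriv_of_isOpen hI htop
  have hdB : ∀ i j, ContDiffOn ℝ (⊤ : ℕ∞) (fun t => dB t i j) (Ioo (-δ) δ) := fun i j => by
    simpa [hdB_def] using (hB i j).deriv_of_isOpen hI htop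
  have hdC : ∀ i j, ContDiffOn ℝ (⊤ : ℕ∞) (fun t => dC t i j) (Ioo (-δ) δ) := fun i j => by
    simpa [hdC_def] using (hC i j).deriv_of_isOpen hI htop
  have hd2A : ∀ i j, ContDiffOn ℝ (⊤ : ℕ∞) (fun t => d2A t i j) (Ioo (-δ) δ) := fun i j => by
    simpa [hd2A_def] using (hdA i j).deriv_of_isOpen hI htop
  -- HasDerivAt facts
  have hDeriv : ∀ (n' p' : ℕ) (M : ℝ → Matrix (Fin n') (Fin p') ℝ)
      (_ : ∀ i j, ContDiffOn ℝ (⊤ : ℕ∞) (fun t => M t i j) (Ioo (-δ) δ))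
      (i : Fin n') (j : Fin p') (t : ℝ) (_ : t ∈ Ioo (-δ) δ),
      HasDerivAt (fun s => M s i j) (deriv (fun s => M s i j) t) t := by
    intro n' p' M hM i j t ht
    exact (((hM i j).contDiffAt (hI.mem_nhds ht)).differentiableAt (by simp)).hasDerivAt
  have hAd : ∀ i j, ∀ t ∈ Ioo (-δ) δ, HasDerivAt (fun s => A s i j) (dA t i j) t :=
    fun i j t ht => hDeriv m m A hA i j t ht
  have hBd : ∀ i j, ∀ t ∈ Ioo (-δ) δ, HasDerivAt (fun s => B s i j) (dB t i j) t :=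
    fun i j t ht => hDeriv ℓ ℓ B hB i j t ht
  have hCd : ∀ i j, ∀ t ∈ Ioo (-δ) δ, HasDerivAt (fun s => C s i j) (dC t i j) t :=
    fun i j t ht => hDeriv m ℓ C hC i j t ht
  have hdAd : ∀ i j, ∀ t ∈ Ioo (-δ) δ, HasDerivAt (fun s => dA s i j) (d2A t i j) t :=
    fun i j t ht => hDeriv m m dA hdA i j t ht
  -- the auxiliary matrices
  set Q : ℝ → Matrix (Fin ℓ ⊕ Fin m) (Fin ℓ ⊕ Fin m) ℝ := fun t =>
    Matrix.fromBlocks (1 + t ^ 2 • B t) (t • (C₀ + t • C t))ᵀ (t • (C₀ + t • C t))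
      (A₀ + t • A₁ + t ^ 2 • A t) with hQ_def
  set R : ℝ → Matrix (Fin m) (Fin ℓ) ℝ := fun t =>
    (2 : ℝ) • C₀ + (3 * t) • C t + t ^ 2 • dC t with hR_def
  set V : ℝ → Matrix (Fin ℓ) (Fin ℓ) ℝ := fun t =>
    (2 : ℝ) • (1 : Matrix (Fin ℓ) (Fin ℓ) ℝ) + (4 * t ^ 2) • B t + t ^ 3 • dB t with hV_def
  set Y : ℝ → Matrix (Fin m) (Fin m) ℝ := fun t =>
    A₁ + (2 * t) • A t + t ^ 2 • dA t with hY_def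
  have hA₀det : IsUnit A₀.det := hA₀pd.det_pos.ne'.isUnit
  have hQ0 : Q 0 = Matrix.fromBlocks 1 0 0 A₀ := by
    simp [hQ_def]
  have hQ0det : IsUnit (Q 0).det := by
    rw [hQ0, Matrix.det_fromBlocks_zero₂₁]
    simpa using hA₀det
  have hQ0inv : (Q 0)⁻¹ = Matrix.fromBlocks 1 0 0 A₀⁻¹ := by
    rw [hQ0]
    apply Matrix.inv_eq_right_inv
    rw [Matrix.fromBlocks_multiply]
    simp [Matrix.mul_nonsing_inv _ hA₀det, Matrix.fromBlocks_one]
  -- continuity of basic data at 0 (along the full nhds for Q)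
  have hContAt : ∀ (n' p' : ℕ) (M : ℝ → Matrix (Fin n') (Fin p') ℝ)
      (_ : ∀ i j, ContDiffOn ℝ (⊤ : ℕ∞) (fun t => M t i j) (Ioo (-δ) δ)),
      Tendsto M (𝓝 (0:ℝ)) (𝓝 (M 0)) := by
    intro n' p' M hM
    refine tendsto_mat_of_entries fun i j => ?_
    exact ((hM i j).continuousOn.continuousAt (hI.mem_nhds h0I)).tendsto
  have htid : Tendsto (fun t : ℝ => t) (𝓝 (0:ℝ)) (𝓝 0) := fun s hs => hs
  have htQ : Tendsto Q (𝓝 (0:ℝ)) (𝓝 (Q 0)) := by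
    rw [hQ0, hQ_def]
    have h11 : Tendsto (fun t : ℝ => 1 + t ^ 2 • B t) (𝓝 (0:ℝ))
        (𝓝 (1 : Matrix (Fin ℓ) (Fin ℓ) ℝ)) := by
      have := Tendsto.add (tendsto_const_nhds (x := (1 : Matrix (Fin ℓ) (Fin ℓ) ℝ)))
        (Filter.Tendsto.matsmul (c₀ := 0) (by simpa using (htid.pow 2)) (hContAt ℓ ℓ B hB))
      simpa using this
    have h21 : Tendsto (fun t : ℝ => t • (C₀ + t • C t)) (𝓝 (0:ℝ))
        (𝓝 (0 : Matrix (Fin m) (Fin ℓ) ℝ)) := by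
      have := Filter.Tendsto.matsmul (c₀ := 0) htid
        (Tendsto.add (tendsto_const_nhds (x := C₀))
          (Filter.Tendsto.matsmul (c₀ := 0) htid (hContAt m ℓ C hC)))
      simpa using this
    have h22 : Tendsto (fun t : ℝ => A₀ + t • A₁ + t ^ 2 • A t) (𝓝 (0:ℝ)) (𝓝 A₀) := by
      have := Tendsto.add (Tendsto.add (tendsto_const_nhds (x := A₀))
        (Filter.Tendsto.matsmul (c₀ := 0) htid (tendsto_const_nhds (x := A₁))))
        (Filter.Tendsto.matsmul (c₀ := 0) (by simpa using (htid.pow 2)) (hContAt m m A hA))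
      simpa using this
    have := tendsto_fromBlocks h11 h21.mattranspose h21 h22
    simpa using this
  -- eventual invertibility of Q
  have hdetQ : Tendsto (fun t => (Q t).det) (𝓝 (0:ℝ)) (𝓝 (Q 0).det) :=
    (Continuous.matrix_det continuous_id).continuousAt.tendsto.comp htQ
  have hev : ∀ᶠ t in 𝓝 (0:ℝ), (Q t).det ≠ 0 :=
    hdetQ.eventually_ne (by simpa [isUnit_iff_ne_zero] using hQ0det)
  obtain ⟨ε₁, hε₁, hball⟩ := Metric.eventually_nhds_iff_ball.1 hev
  set ε := min ε₁ δ with hε_def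
  have hεpos : 0 < ε := lt_min hε₁ hδ
  have hsub : Ioo (0:ℝ) ε ⊆ Ioo (-δ) δ := fun t ht =>
    ⟨by linarith [ht.1], lt_of_lt_of_le ht.2 (min_le_right _ _)⟩
  have hQdet : ∀ t ∈ Ioo (0:ℝ) ε, IsUnit (Q t).det := by
    intro t ht
    have htb : t ∈ Metric.ball (0:ℝ) ε₁ := by
      rw [Metric.mem_ball, Real.dist_eq, sub_zero, abs_of_pos ht.1]
      exact lt_of_lt_of_le ht.2 (min_le_left _ _)
    exact isUnit_iff_ne_zero.2 (hball t htb)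
  set D : ℝ → Matrix (Fin ℓ ⊕ Fin m) (Fin ℓ ⊕ Fin m) ℝ := fun t =>
    Matrix.fromBlocks (t • 1) 0 0 1 with hD_def
  set E : ℝ → Matrix (Fin ℓ ⊕ Fin m) (Fin ℓ ⊕ Fin m) ℝ := fun t =>
    Matrix.fromBlocks (t⁻¹ • 1) 0 0 1 with hE_def
  have hDE : ∀ t : ℝ, t ≠ 0 → D t * E t = 1 := by
    intro t ht0
    rw [hD_def, hE_def]
    simp only [Matrix.fromBlocks_multiply, Matrix.smul_mul, Matrix.mul_smul, Matrix.one_mul,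
      Matrix.mul_one, Matrix.zero_mul, Matrix.mul_zero, add_zero, zero_add, smul_smul,
      mul_inv_cancel₀ ht0, inv_mul_cancel₀ ht0, one_smul, smul_zero]
    exact Matrix.fromBlocks_one
  have hDQD : ∀ t : ℝ, P t = D t * Q t * D t := by
    intro t
    rw [hP, hD_def, hQ_def]
    simp only [Matrix.fromBlocks_multiply, Matrix.smul_mul, Matrix.mul_smul, Matrix.one_mul,
      Matrix.mul_one, Matrix.zero_mul, Matrix.mul_zero, add_zero, zero_add]
    rw [Matrix.fromBlocks_inj]
    simp only [Matrix.transpose_add, Matrix.transpose_smul]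
    refine ⟨?_, ?_, ?_, ?_⟩ <;> try rfl
    all_goals try simp only [smul_zero, add_zero]
    all_goals match_scalars <;> ring
  have hdetD : ∀ t : ℝ, (D t).det = t ^ ℓ := by
    intro t
    rw [hD_def]
    simp [Matrix.det_fromBlocks_zero₂₁, Matrix.det_smul]
  have hPunit : ∀ t ∈ Ioo (0:ℝ) ε, IsUnit (P t) := by
    intro t ht
    rw [Matrix.isUnit_iff_isUnit_det, hDQD t, Matrix.det_mul, Matrix.det_mul, hdetD]
    exact ((isUnit_iff_ne_zero.2 (pow_ne_zero ℓ ht.1.ne')).mul (hQdet t ht)).mul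
      (isUnit_iff_ne_zero.2 (pow_ne_zero ℓ ht.1.ne'))
  have hPinv : ∀ t ∈ Ioo (0:ℝ) ε, (P t)⁻¹ = E t * ((Q t)⁻¹ * E t) := by
    intro t ht
    rw [hDQD t, Matrix.mul_inv_rev, Matrix.mul_inv_rev,
      Matrix.inv_eq_right_inv (hDE t ht.1.ne')]
  have hP'f : ∀ t ∈ Ioo (-δ) δ, P' t =
      Matrix.fromBlocks (t • V t) (t • (R t)ᵀ) (t • R t) (Y t) := by
    intro t ht
    ext u v
    rw [hP' t u v]
    cases u with
    | inl i => cases v with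
      | inl j =>
        have hfun : (fun s => P s (Sum.inl i) (Sum.inl j)) =
            fun s => s ^ 2 * (1 : Matrix (Fin ℓ) (Fin ℓ) ℝ) i j + s ^ 4 * B s i j := by
          funext s; rw [hP s]
          simp only [Matrix.fromBlocks_apply₁₁, Matrix.fromBlocks_apply₁₂, Matrix.fromBlocks_apply₂₁, Matrix.fromBlocks_apply₂₂, Matrix.transpose_apply, Matrix.add_apply, Matrix.smul_apply, smul_eq_mul, Matrix.of_apply]
        rw [hfun]
        have h1 : HasDerivAt
            (fun s : ℝ => s ^ 2 * (1 : Matrix (Fin ℓ) (Fin ℓ) ℝ) i j + s ^ 4 * B s i j)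
            (2 * t * (1 : Matrix (Fin ℓ) (Fin ℓ) ℝ) i j
              + (4 * t ^ 3 * B t i j + t ^ 4 * dB t i j)) t := by
          have := ((hasDerivAt_pow 2 t).mul_const ((1 : Matrix (Fin ℓ) (Fin ℓ) ℝ) i j)).add
            ((hasDerivAt_pow 4 t).mul (hBd i j t ht))
          refine this.congr_deriv ?_
          first
          | (simp only [id_eq]; push_cast; ring)
          | (push_cast; ring)
        rw [h1.deriv]
        simp only [hV_def, Matrix.fromBlocks_apply₁₁, Matrix.fromBlocks_apply₁₂, Matrix.fromBlocks_apply₂₁, Matrix.fromBlocks_apply₂₂, Matrix.transpose_apply, Matrix.add_apply, Matrix.smul_apply, smul_eq_mul, Matrix.of_apply]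
        ring
      | inr j =>
        have hfun : (fun s => P s (Sum.inl i) (Sum.inr j)) =
            fun s => s ^ 2 * C₀ j i + s ^ 3 * C s j i := by
          funext s; rw [hP s]
          simp only [Matrix.fromBlocks_apply₁₁, Matrix.fromBlocks_apply₁₂, Matrix.fromBlocks_apply₂₁, Matrix.fromBlocks_apply₂₂, Matrix.transpose_apply, Matrix.add_apply, Matrix.smul_apply, smul_eq_mul, Matrix.of_apply]
        rw [hfun]
        have h1 : HasDerivAt (fun s : ℝ => s ^ 2 * C₀ j i + s ^ 3 * C s j i)
            (2 * t * C₀ j i + (3 * t ^ 2 * C t j i + t ^ 3 * dC t j i)) t := by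
          have := ((hasDerivAt_pow 2 t).mul_const (C₀ j i)).add
            ((hasDerivAt_pow 3 t).mul (hCd j i t ht))
          refine this.congr_deriv ?_
          first
          | (simp only [id_eq]; push_cast; ring)
          | (push_cast; ring)
        rw [h1.deriv]
        simp only [hR_def, Matrix.fromBlocks_apply₁₁, Matrix.fromBlocks_apply₁₂, Matrix.fromBlocks_apply₂₁, Matrix.fromBlocks_apply₂₂, Matrix.transpose_apply, Matrix.add_apply, Matrix.smul_apply, smul_eq_mul, Matrix.of_apply]
        ring
    | inr i => cases v with
      | inl j =>
        have hfun : (fun s => P s (Sum.inr i) (Sum.inl j)) =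
            fun s => s ^ 2 * C₀ i j + s ^ 3 * C s i j := by
          funext s; rw [hP s]
          simp only [Matrix.fromBlocks_apply₁₁, Matrix.fromBlocks_apply₁₂, Matrix.fromBlocks_apply₂₁, Matrix.fromBlocks_apply₂₂, Matrix.transpose_apply, Matrix.add_apply, Matrix.smul_apply, smul_eq_mul, Matrix.of_apply]
        rw [hfun]
        have h1 : HasDerivAt (fun s : ℝ => s ^ 2 * C₀ i j + s ^ 3 * C s i j)
            (2 * t * C₀ i j + (3 * t ^ 2 * C t i j + t ^ 3 * dC t i j)) t := by
          have := ((hasDerivAt_pow 2 t).mul_const (C₀ i j)).add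
            ((hasDerivAt_pow 3 t).mul (hCd i j t ht))
          refine this.congr_deriv ?_
          first
          | (simp only [id_eq]; push_cast; ring)
          | (push_cast; ring)
        rw [h1.deriv]
        simp only [hR_def, Matrix.fromBlocks_apply₁₁, Matrix.fromBlocks_apply₁₂, Matrix.fromBlocks_apply₂₁, Matrix.fromBlocks_apply₂₂, Matrix.transpose_apply, Matrix.add_apply, Matrix.smul_apply, smul_eq_mul, Matrix.of_apply]
        ring
      | inr j =>
        have hfun : (fun s => P s (Sum.inr i) (Sum.inr j)) =
            fun s => A₀ i j + s * A₁ i j + s ^ 2 * A s i j := by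
          funext s; rw [hP s]
          simp only [Matrix.fromBlocks_apply₁₁, Matrix.fromBlocks_apply₁₂, Matrix.fromBlocks_apply₂₁, Matrix.fromBlocks_apply₂₂, Matrix.transpose_apply, Matrix.add_apply, Matrix.smul_apply, smul_eq_mul, Matrix.of_apply]
        rw [hfun]
        have h1 : HasDerivAt (fun s : ℝ => A₀ i j + s * A₁ i j + s ^ 2 * A s i j)
            (A₁ i j + (2 * t * A t i j + t ^ 2 * dA t i j)) t := by
          have := (((hasDerivAt_const t (A₀ i j)).add
            ((hasDerivAt_id t).mul_const (A₁ i j))).add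
            ((hasDerivAt_pow 2 t).mul (hAd i j t ht)))
          refine this.congr_deriv ?_
          first
          | (simp only [id_eq]; push_cast; ring)
          | (push_cast; ring)
        rw [h1.deriv]
        simp only [hY_def, Matrix.fromBlocks_apply₁₁, Matrix.fromBlocks_apply₁₂, Matrix.fromBlocks_apply₂₁, Matrix.fromBlocks_apply₂₂, Matrix.transpose_apply, Matrix.add_apply, Matrix.smul_apply, smul_eq_mul, Matrix.of_apply]
        ring
  have hP''22 : ∀ t ∈ Ioo (-δ) δ, (P'' t).toBlocks₂₂ =
      (2:ℝ) • A t + (4 * t) • dA t + t ^ 2 • d2A t := by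
    intro t ht
    ext i j
    have : (P'' t).toBlocks₂₂ i j = P'' t (Sum.inr i) (Sum.inr j) := rfl
    rw [this, hP'' t]
    have hevq : (fun s => P' s (Sum.inr i) (Sum.inr j)) =ᶠ[𝓝 t]
        (fun s => A₁ i j + 2 * s * A s i j + s ^ 2 * dA s i j) := by
      filter_upwards [hI.mem_nhds ht] with s hs
      rw [hP'f s hs]
      simp only [hY_def, Matrix.fromBlocks_apply₁₁, Matrix.fromBlocks_apply₁₂, Matrix.fromBlocks_apply₂₁, Matrix.fromBlocks_apply₂₂, Matrix.transpose_apply, Matrix.add_apply, Matrix.smul_apply, smul_eq_mul, Matrix.of_apply]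
      try ring
    rw [hevq.deriv_eq]
    have h1 : HasDerivAt (fun s : ℝ => A₁ i j + 2 * s * A s i j + s ^ 2 * dA s i j)
        (2 * A t i j + 2 * t * dA t i j + (2 * t * dA t i j + t ^ 2 * d2A t i j)) t := by
      have := (((hasDerivAt_const t (A₁ i j)).add
        (((hasDerivAt_id t).const_mul 2).mul (hAd i j t ht))).add
        ((hasDerivAt_pow 2 t).mul (hdAd i j t ht)))
      refine this.congr_deriv ?_
      first
          | (simp only [id_eq]; push_cast; ring)
          | (push_cast; ring)
    rw [h1.deriv]
    simp only [Matrix.add_apply, Matrix.smul_apply, smul_eq_mul]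
    ring
  set lT := 𝓝[>] (0:ℝ) with hlT_def
  set N : Matrix (Fin ℓ ⊕ Fin m) (Fin ℓ ⊕ Fin m) ℝ :=
    (Q 0)⁻¹ * Matrix.fromBlocks 0 C₀ᵀ C₀ A₁ * (Q 0)⁻¹ with hN_def
  set g : ℝ → Matrix (Fin ℓ ⊕ Fin m) (Fin ℓ ⊕ Fin m) ℝ :=
    fun t => (1/t) • ((Q t)⁻¹ - (Q 0)⁻¹) with hg_def
  set τ : ℝ → ℝ := fun t =>
    2 * ((g t).toBlocks₁₁).trace
    + ((Q t)⁻¹.toBlocks₁₁ * ((4*t) • B t + t ^ 2 • dB t)).trace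
    + ((Q t)⁻¹.toBlocks₁₂ * R t).trace
    + ((Q t)⁻¹.toBlocks₂₁ * (R t)ᵀ).trace
    + ((Q t)⁻¹.toBlocks₂₂ * Y t).trace with hτ_def
  have hK : ∀ t ∈ Ioo (0:ℝ) ε, E t * (P' t * E t) =
      Matrix.fromBlocks ((2 * t⁻¹) • 1 + ((4*t) • B t + t ^ 2 • dB t)) (R t)ᵀ (R t) (Y t) := by
    intro t ht
    have ht0 : t ≠ 0 := ht.1.ne'
    rw [hP'f t (hsub ht), hE_def]
    simp only [Matrix.fromBlocks_multiply, Matrix.smul_mul, Matrix.mul_smul, Matrix.one_mul,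
      Matrix.mul_one, Matrix.zero_mul, Matrix.mul_zero, add_zero, zero_add, smul_zero]
    rw [Matrix.fromBlocks_inj]
    refine ⟨?_, ?_, ?_, ?_⟩ <;> try rfl
    all_goals try simp only [hV_def]
    all_goals match_scalars
    all_goals field_simp
    all_goals try ring
  have htr : ∀ t ∈ Ioo (0:ℝ) ε, ((P t)⁻¹ * P' t).trace = 2 * (ℓ:ℝ) / t + τ t := by
    intro t ht
    have ht0 : t ≠ 0 := ht.1.ne'
    rw [hPinv t ht]
    rw [show E t * ((Q t)⁻¹ * E t) * P' t = E t * ((Q t)⁻¹ * (E t * P' t)) from by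
      simp only [Matrix.mul_assoc]]
    rw [Matrix.trace_mul_comm]
    rw [show (Q t)⁻¹ * (E t * P' t) * E t = (Q t)⁻¹ * (E t * (P' t * E t)) from by
      simp only [Matrix.mul_assoc]]
    rw [hK t ht]
    conv_lhs => rw [← Matrix.fromBlocks_toBlocks ((Q t)⁻¹)]
    rw [Matrix.fromBlocks_multiply, trace_fromBlocks']
    rw [hτ_def, hg_def]
    simp only [toBlocks₁₁_smul, toBlocks₁₁_sub, hQ0inv, Matrix.toBlocks_fromBlocks₁₁]
    simp only [Matrix.mul_add, Matrix.trace_add, Matrix.mul_smul, Matrix.mul_one,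
      Matrix.trace_smul, smul_eq_mul, Matrix.trace_sub, Matrix.trace_one]
    simp only [Fintype.card_fin]
    field_simp
    ring
  have hblk : ∀ t ∈ Ioo (0:ℝ) ε, (P' t * (P t)⁻¹ * P' t).toBlocks₂₂ =
      R t * (Q t)⁻¹.toBlocks₁₁ * (R t)ᵀ + Y t * (Q t)⁻¹.toBlocks₂₁ * (R t)ᵀ
      + (R t * (Q t)⁻¹.toBlocks₁₂ * Y t + Y t * (Q t)⁻¹.toBlocks₂₂ * Y t) := by
    intro t ht
    have ht0 : t ≠ 0 := ht.1.ne'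
    have hPE : P' t * E t = Matrix.fromBlocks (V t) (t • (R t)ᵀ) (R t) (Y t) := by
      rw [hP'f t (hsub ht), hE_def]
      simp only [Matrix.fromBlocks_multiply, Matrix.smul_mul, Matrix.mul_smul, Matrix.one_mul,
        Matrix.mul_one, Matrix.zero_mul, Matrix.mul_zero, add_zero, zero_add, smul_zero]
      rw [Matrix.fromBlocks_inj]
      refine ⟨?_, ?_, ?_, ?_⟩ <;> try rfl
      all_goals match_scalars
      all_goals field_simp
      all_goals try ring
    have hEP : E t * P' t = Matrix.fromBlocks (V t) ((R t)ᵀ) (t • R t) (Y t) := by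
      rw [hP'f t (hsub ht), hE_def]
      simp only [Matrix.fromBlocks_multiply, Matrix.smul_mul, Matrix.mul_smul, Matrix.one_mul,
        Matrix.mul_one, Matrix.zero_mul, Matrix.mul_zero, add_zero, zero_add, smul_zero]
      rw [Matrix.fromBlocks_inj]
      refine ⟨?_, ?_, ?_, ?_⟩ <;> try rfl
      all_goals match_scalars
      all_goals field_simp
      all_goals try ring
    have hassoc : P' t * (P t)⁻¹ * P' t = (P' t * E t) * ((Q t)⁻¹ * (E t * P' t)) := by
      rw [hPinv t ht]; simp only [Matrix.mul_assoc]
    rw [hassoc, hPE, hEP]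
    conv_lhs => rw [← Matrix.fromBlocks_toBlocks ((Q t)⁻¹)]
    rw [Matrix.fromBlocks_multiply, Matrix.fromBlocks_multiply, Matrix.toBlocks_fromBlocks₂₂]
    simp only [Matrix.mul_add, ← Matrix.mul_assoc]
    abel
  -- limits
  have htid' : Tendsto (fun t : ℝ => t) lT (𝓝 0) := tendsto_id.mono_right nhdsWithin_le_nhds
  have htQ' : Tendsto Q lT (𝓝 (Q 0)) := htQ.mono_left nhdsWithin_le_nhds
  have htQi : Tendsto (fun t => (Q t)⁻¹) lT (𝓝 ((Q 0)⁻¹)) := tendsto_mat_inv htQ' hQ0det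
  have hmemIoo : Ioo (0:ℝ) ε ∈ lT := Ioo_mem_nhdsGT_of_mem (left_mem_Ico.2 hεpos)
  have tA : Tendsto A lT (𝓝 (A 0)) := (hContAt m m A hA).mono_left nhdsWithin_le_nhds
  have tB : Tendsto B lT (𝓝 (B 0)) := (hContAt ℓ ℓ B hB).mono_left nhdsWithin_le_nhds
  have tC : Tendsto C lT (𝓝 (C 0)) := (hContAt m ℓ C hC).mono_left nhdsWithin_le_nhds
  have tdA : Tendsto dA lT (𝓝 (dA 0)) := (hContAt m m dA hdA).mono_left nhdsWithin_le_nhds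
  have tdB : Tendsto dB lT (𝓝 (dB 0)) := (hContAt ℓ ℓ dB hdB).mono_left nhdsWithin_le_nhds
  have tdC : Tendsto dC lT (𝓝 (dC 0)) := (hContAt m ℓ dC hdC).mono_left nhdsWithin_le_nhds
  have td2A : Tendsto d2A lT (𝓝 (d2A 0)) := (hContAt m m d2A hd2A).mono_left nhdsWithin_le_nhds
  have tR : Tendsto R lT (𝓝 ((2:ℝ) • C₀)) := by
    rw [hR_def]
    have := ((tendsto_const_nhds (x := (2:ℝ) • C₀)).add
      (Filter.Tendsto.matsmul (c₀ := 0) (by simpa using tendsto_const_nhds.mul htid' :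
        Tendsto (fun t : ℝ => 3 * t) lT (𝓝 0)) tC)).add
      (Filter.Tendsto.matsmul (c₀ := 0) (by simpa using htid'.pow 2 :
        Tendsto (fun t : ℝ => t ^ 2) lT (𝓝 0)) tdC)
    simpa using this
  have tY : Tendsto Y lT (𝓝 A₁) := by
    rw [hY_def]
    have := ((tendsto_const_nhds (x := A₁)).add
      (Filter.Tendsto.matsmul (c₀ := 0) (by simpa using tendsto_const_nhds.mul htid' :
        Tendsto (fun t : ℝ => 2 * t) lT (𝓝 0)) tA)).add
      (Filter.Tendsto.matsmul (c₀ := 0) (by simpa using htid'.pow 2 :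
        Tendsto (fun t : ℝ => t ^ 2) lT (𝓝 0)) tdA)
    simpa using this
  have tZ : Tendsto (fun t => (4*t) • B t + t ^ 2 • dB t) lT
      (𝓝 (0 : Matrix (Fin ℓ) (Fin ℓ) ℝ)) := by
    have := (Filter.Tendsto.matsmul (c₀ := 0) (by simpa using tendsto_const_nhds.mul htid' :
        Tendsto (fun t : ℝ => 4 * t) lT (𝓝 0)) tB).add
      (Filter.Tendsto.matsmul (c₀ := 0) (by simpa using htid'.pow 2 :
        Tendsto (fun t : ℝ => t ^ 2) lT (𝓝 0)) tdB)
    simpa using this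
  have tQi11 : Tendsto (fun t => (Q t)⁻¹.toBlocks₁₁) lT (𝓝 1) := by
    have := tendsto_toBlocks₁₁ htQi
    rwa [hQ0inv, Matrix.toBlocks_fromBlocks₁₁] at this
  have tQi12 : Tendsto (fun t => (Q t)⁻¹.toBlocks₁₂) lT (𝓝 0) := by
    have := tendsto_toBlocks₁₂ htQi
    rwa [hQ0inv, Matrix.toBlocks_fromBlocks₁₂] at this
  have tQi21 : Tendsto (fun t => (Q t)⁻¹.toBlocks₂₁) lT (𝓝 0) := by
    have := tendsto_toBlocks₂₁ htQi
    rwa [hQ0inv, Matrix.toBlocks_fromBlocks₂₁] at this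
  have tQi22 : Tendsto (fun t => (Q t)⁻¹.toBlocks₂₂) lT (𝓝 A₀⁻¹) := by
    have := tendsto_toBlocks₂₂ htQi
    rwa [hQ0inv, Matrix.toBlocks_fromBlocks₂₂] at this
  -- the difference quotient of Q⁻¹
  have hDQlim : Tendsto (fun t => (1/t) • (Q t - Q 0)) lT
      (𝓝 (Matrix.fromBlocks 0 C₀ᵀ C₀ A₁)) := by
    have heq : ∀ᶠ t in lT, (1/t) • (Q t - Q 0) =
        Matrix.fromBlocks (t • B t) (C₀ᵀ + t • (C t)ᵀ) (C₀ + t • C t) (A₁ + t • A t) := by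
      filter_upwards [hmemIoo] with t ht
      have ht0 : t ≠ 0 := ht.1.ne'
      rw [hQ0]
      rw [show Q t = Matrix.fromBlocks (1 + t ^ 2 • B t) (t • (C₀ + t • C t))ᵀ
        (t • (C₀ + t • C t)) (A₀ + t • A₁ + t ^ 2 • A t) from by rw [hQ_def]]
      symm
      ext u v
      cases u <;> cases v <;>
        simp only [Matrix.smul_apply, Matrix.sub_apply, Matrix.fromBlocks_apply₁₁,
          Matrix.fromBlocks_apply₁₂, Matrix.fromBlocks_apply₂₁, Matrix.fromBlocks_apply₂₂,
          Matrix.add_apply, Matrix.transpose_apply, Matrix.one_apply, Matrix.zero_apply,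
          smul_eq_mul] <;>
        field_simp <;> ring
    have hlim : Tendsto (fun t =>
        Matrix.fromBlocks (t • B t) (C₀ᵀ + t • (C t)ᵀ) (C₀ + t • C t) (A₁ + t • A t)) lT
        (𝓝 (Matrix.fromBlocks 0 C₀ᵀ C₀ A₁)) := by
      have h11 := Filter.Tendsto.matsmul (c₀ := 0) htid' tB
      have h12 := (tendsto_const_nhds (x := C₀ᵀ)).add
        (Filter.Tendsto.matsmul (c₀ := 0) htid' tC.mattranspose)
      have h21 := (tendsto_const_nhds (x := C₀)).add
        (Filter.Tendsto.matsmul (c₀ := 0) htid' tC)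
      have h22 := (tendsto_const_nhds (x := A₁)).add
        (Filter.Tendsto.matsmul (c₀ := 0) htid' tA)
      have := tendsto_fromBlocks h11 h12 h21 h22
      simpa using this
    exact hlim.congr' (heq.mono fun t h => h.symm)
  have hgt : Tendsto g lT (𝓝 (-N)) := by
    have hgid : ∀ᶠ t in lT, -((Q t)⁻¹ * ((1/t) • (Q t - Q 0)) * (Q 0)⁻¹) = g t := by
      filter_upwards [hmemIoo] with t ht
      have h1 : (Q t)⁻¹ * (Q t - Q 0) * (Q 0)⁻¹ = (Q 0)⁻¹ - (Q t)⁻¹ := by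
        rw [Matrix.mul_sub, Matrix.nonsing_inv_mul _ (hQdet t ht), Matrix.sub_mul,
          Matrix.one_mul, Matrix.mul_assoc, Matrix.mul_nonsing_inv _ hQ0det, Matrix.mul_one]
      rw [Matrix.mul_smul, Matrix.smul_mul, h1, ← smul_neg, neg_sub]
    have hmain : Tendsto (fun t => -((Q t)⁻¹ * ((1/t) • (Q t - Q 0)) * (Q 0)⁻¹)) lT (𝓝 (-N)) := by
      rw [hN_def]
      exact ((htQi.matmul hDQlim).matmul tendsto_const_nhds).neg
    exact hmain.congr' hgid
  have hN11 : N.toBlocks₁₁ = 0 := by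
    rw [hN_def, hQ0inv]
    simp [Matrix.fromBlocks_multiply, Matrix.toBlocks_fromBlocks₁₁]
  have tg11 : Tendsto (fun t => (g t).toBlocks₁₁) lT (𝓝 0) := by
    have := tendsto_toBlocks₁₁ hgt
    have hneg : (-N).toBlocks₁₁ = -(N.toBlocks₁₁) := rfl
    rw [hneg, hN11, neg_zero] at this
    exact this
  have hτlim : Tendsto τ lT (𝓝 ((A₀⁻¹ * A₁).trace)) := by
    rw [hτ_def]
    have h1 : Tendsto (fun t => 2 * ((g t).toBlocks₁₁).trace) lT (𝓝 0) := by
      simpa using (tendsto_const_nhds (x := (2:ℝ))).mul tg11.mattrace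
    have h2 : Tendsto (fun t => ((Q t)⁻¹.toBlocks₁₁ * ((4*t) • B t + t ^ 2 • dB t)).trace) lT
        (𝓝 0) := by simpa using (tQi11.matmul tZ).mattrace
    have h3 : Tendsto (fun t => ((Q t)⁻¹.toBlocks₁₂ * R t).trace) lT (𝓝 0) := by
      simpa using (tQi12.matmul tR).mattrace
    have h4 : Tendsto (fun t => ((Q t)⁻¹.toBlocks₂₁ * (R t)ᵀ).trace) lT (𝓝 0) := by
      simpa using (tQi21.matmul tR.mattranspose).mattrace
    have h5 : Tendsto (fun t => ((Q t)⁻¹.toBlocks₂₂ * Y t).trace) lT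
        (𝓝 ((A₀⁻¹ * A₁).trace)) := (tQi22.matmul tY).mattrace
    have := ((((h1.add h2).add h3).add h4).add h5)
    simpa using this
  set F : ℝ → Matrix (Fin m) (Fin m) ℝ := fun t =>
    (-(1/4 : ℝ) * τ t) • Y t - (ℓ:ℝ) • A t - ((ℓ:ℝ) * t / 2) • dA t
    + (1/2 : ℝ) • (R t * (Q t)⁻¹.toBlocks₁₁ * (R t)ᵀ + Y t * (Q t)⁻¹.toBlocks₂₁ * (R t)ᵀ
        + (R t * (Q t)⁻¹.toBlocks₁₂ * Y t + Y t * (Q t)⁻¹.toBlocks₂₂ * Y t))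
    - (1/2 : ℝ) • ((2:ℝ) • A t + (4*t) • dA t + t ^ 2 • d2A t) with hF_def
  have hFeq : ∀ᶠ t in lT, F t = (L t).toBlocks₂₂ + ((ℓ:ℝ)/(2*t)) • A₁ := by
    filter_upwards [hmemIoo] with t ht
    have ht0 : t ≠ 0 := ht.1.ne'
    have h22 : (P' t).toBlocks₂₂ = Y t := by
      rw [hP'f t (hsub ht)]; exact Matrix.toBlocks_fromBlocks₂₂ _ _ _ _
    symm
    rw [hL t]
    simp only [toBlocks₂₂_sub, toBlocks₂₂_add, toBlocks₂₂_smul]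
    rw [htr t ht, hblk t ht, hP''22 t (hsub ht), h22, hF_def]
    simp only [hY_def]
    match_scalars
    all_goals field_simp
    all_goals ring
  have hFlim : Tendsto F lT
      (𝓝 (-(((ℓ : ℝ) + 1) • A 0) - ((1 / 4 : ℝ) * Matrix.trace (A₀⁻¹ * A₁)) • A₁
          + (1 / 2 : ℝ) • (A₁ * A₀⁻¹ * A₁) + (2 : ℝ) • (C₀ * C₀ᵀ))) := by
    rw [hF_def]
    have t1 : Tendsto (fun t => (-(1/4 : ℝ) * τ t) • Y t) lT
        (𝓝 ((-(1/4 : ℝ) * (A₀⁻¹ * A₁).trace) • A₁)) :=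
      Filter.Tendsto.matsmul (tendsto_const_nhds.mul hτlim) tY
    have t2 : Tendsto (fun t => (ℓ:ℝ) • A t) lT (𝓝 ((ℓ:ℝ) • A 0)) :=
      Filter.Tendsto.matsmul tendsto_const_nhds tA
    have t3 : Tendsto (fun t => ((ℓ:ℝ) * t / 2) • dA t) lT (𝓝 (0 : Matrix (Fin m) (Fin m) ℝ)) := by
      have hc : Tendsto (fun t : ℝ => (ℓ:ℝ) * t / 2) lT (𝓝 0) := by
        simpa using (tendsto_const_nhds.mul htid').div_const (2:ℝ)
      simpa using Filter.Tendsto.matsmul hc tdA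
    have t4 : Tendsto (fun t => (1/2 : ℝ) • (R t * (Q t)⁻¹.toBlocks₁₁ * (R t)ᵀ
        + Y t * (Q t)⁻¹.toBlocks₂₁ * (R t)ᵀ
        + (R t * (Q t)⁻¹.toBlocks₁₂ * Y t + Y t * (Q t)⁻¹.toBlocks₂₂ * Y t))) lT
        (𝓝 ((1/2 : ℝ) • (((2:ℝ) • C₀) * (1 : Matrix (Fin ℓ) (Fin ℓ) ℝ) * ((2:ℝ) • C₀)ᵀ
          + A₁ * (0 : Matrix (Fin m) (Fin ℓ) ℝ) * ((2:ℝ) • C₀)ᵀ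
          + (((2:ℝ) • C₀) * (0 : Matrix (Fin ℓ) (Fin m) ℝ) * A₁ + A₁ * A₀⁻¹ * A₁)))) :=
      Filter.Tendsto.matsmul tendsto_const_nhds
        ((((tR.matmul tQi11).matmul tR.mattranspose).add
          ((tY.matmul tQi21).matmul tR.mattranspose)).add
          (((tR.matmul tQi12).matmul tY).add ((tY.matmul tQi22).matmul tY)))
    have t5 : Tendsto (fun t => (1/2 : ℝ) • ((2:ℝ) • A t + (4*t) • dA t + t ^ 2 • d2A t)) lT
        (𝓝 ((1/2 : ℝ) • ((2:ℝ) • A 0))) := by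
      have := Filter.Tendsto.matsmul (tendsto_const_nhds (x := (1/2:ℝ)))
        (((Filter.Tendsto.matsmul (tendsto_const_nhds (x := (2:ℝ))) tA).add
          (Filter.Tendsto.matsmul (c₀ := 0) (by simpa using tendsto_const_nhds.mul htid' :
            Tendsto (fun t : ℝ => 4 * t) lT (𝓝 0)) tdA)).add
          (Filter.Tendsto.matsmul (c₀ := 0) (by simpa using htid'.pow 2 :
            Tendsto (fun t : ℝ => t ^ 2) lT (𝓝 0)) td2A))
      simpa using this
    have hall := (((t1.sub t2).sub t3).add t4).sub t5
    convert hall using 2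
    simp only [Matrix.mul_one, Matrix.mul_zero, Matrix.zero_mul, Matrix.smul_mul,
      Matrix.mul_smul, Matrix.transpose_smul, add_zero, zero_add, sub_zero, smul_zero]
    match_scalars
    all_goals ring
  refine ⟨ε, hεpos, hPunit, ?_⟩
  exact hFlim.congr' hFeq
end

section
/- There exists ε > 0 such that P(t) is invertible for all t ∈ (0, ε), and the ℓ×ℓ block of the inverse satisfies lim_{t→0⁺} ( (P(t)⁻¹)_{pp} − t⁻²·Id_ℓ ) = −( B(0) − C₀ᵗA₀⁻¹C₀ ). -/
open Matrix Set Filter Topology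

private theorem auxContAt_matrix_mul {X : Type*} [TopologicalSpace X] {l n p : Type*}
    [Fintype n] {f : X → Matrix l n ℝ} {g : X → Matrix n p ℝ} {x : X}
    (hf : ContinuousAt f x) (hg : ContinuousAt g x) :
    ContinuousAt (fun t => f t * g t) x := by
  have h : ContinuousAt (fun q : Matrix l n ℝ × Matrix n p ℝ => q.1 * q.2) (f x, g x) :=
    (continuous_fst.matrix_mul continuous_snd).continuousAt
  have h2 : Filter.Tendsto ((fun q : Matrix l n ℝ × Matrix n p ℝ => q.1 * q.2) ∘
      fun y => (f y, g y)) (𝓝 x) (𝓝 (f x * g x)) := Filter.Tendsto.comp h (hf.prodMk hg)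
  exact h2

private theorem auxContAt_transpose {X : Type*} [TopologicalSpace X] {l n : Type*}
    {f : X → Matrix l n ℝ} {x : X} (hf : ContinuousAt f x) :
    ContinuousAt (fun t => (f t)ᵀ) x :=
  (continuous_id.matrix_transpose.continuousAt (x := f x)).comp hf

/-- pp-block of P(t)⁻¹ satisfies lim ( (P⁻¹)_pp − t⁻²·Id ) = −(B(0) − C₀ᵀA₀⁻¹C₀). -/
theorem pp_block_of_inverse_limit
    (ℓ m : ℕ) (hℓ : 1 ≤ ℓ) (hm : 1 ≤ m)
    (A₀ A₁ : Matrix (Fin m) (Fin m) ℝ)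
    (C₀ : Matrix (Fin m) (Fin ℓ) ℝ)
    (hA₀pd : A₀.PosDef) (hA₀s : A₀.IsSymm) (hA₁s : A₁.IsSymm)
    (A : ℝ → Matrix (Fin m) (Fin m) ℝ)
    (B : ℝ → Matrix (Fin ℓ) (Fin ℓ) ℝ)
    (C : ℝ → Matrix (Fin m) (Fin ℓ) ℝ)
    (δ : ℝ) (hδ : 0 < δ)
    (hA : ∀ i j, ContDiffOn ℝ (⊤ : ℕ∞) (fun t => A t i j) (Ioo (-δ) δ))
    (hB : ∀ i j, ContDiffOn ℝ (⊤ : ℕ∞) (fun t => B t i j) (Ioo (-δ) δ))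
    (hC : ∀ i j, ContDiffOn ℝ (⊤ : ℕ∞) (fun t => C t i j) (Ioo (-δ) δ))
    (hAs : ∀ t, (A t).IsSymm) (hBs : ∀ t, (B t).IsSymm)
    (P : ℝ → Matrix (Fin ℓ ⊕ Fin m) (Fin ℓ ⊕ Fin m) ℝ)
    (hP : ∀ t, P t = Matrix.fromBlocks
        (t ^ 2 • (1 : Matrix (Fin ℓ) (Fin ℓ) ℝ) + t ^ 4 • B t)
        (t ^ 2 • C₀ + t ^ 3 • C t)ᵀ
        (t ^ 2 • C₀ + t ^ 3 • C t)
        (A₀ + t • A₁ + t ^ 2 • A t)) :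
    ∃ ε > (0 : ℝ), (∀ t ∈ Ioo (0 : ℝ) ε, IsUnit (P t)) ∧
      Tendsto (fun t : ℝ => ((P t)⁻¹).toBlocks₁₁ - (t ^ 2)⁻¹ • (1 : Matrix (Fin ℓ) (Fin ℓ) ℝ))
        (𝓝[>] (0 : ℝ))
        (𝓝 (-(B 0 - C₀ᵀ * A₀⁻¹ * C₀))) := by
  have h0δ : (0 : ℝ) ∈ Ioo (-δ) δ := ⟨by linarith, hδ⟩
  have hmem : Ioo (-δ) δ ∈ 𝓝 (0 : ℝ) := isOpen_Ioo.mem_nhds h0δ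
  -- continuity of the coefficient matrices at 0
  have hAc : ContinuousAt A 0 := by
    refine continuousAt_pi.2 fun i => continuousAt_pi.2 fun j => ?_
    exact (hA i j).continuousOn.continuousAt hmem
  have hBc : ContinuousAt B 0 := by
    refine continuousAt_pi.2 fun i => continuousAt_pi.2 fun j => ?_
    exact (hB i j).continuousOn.continuousAt hmem
  have hCc : ContinuousAt C 0 := by
    refine continuousAt_pi.2 fun i => continuousAt_pi.2 fun j => ?_
    exact (hC i j).continuousOn.continuousAt hmem
  -- D(t), its inverse, M(t), N(t)
  have hDc : ContinuousAt (fun t : ℝ => A₀ + t • A₁ + t ^ 2 • A t) 0 :=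
    (continuousAt_const.add (continuousAt_id.smul continuousAt_const)).add
      ((continuousAt_id.pow 2).smul hAc)
  have hD0 : (fun t : ℝ => A₀ + t • A₁ + t ^ 2 • A t) 0 = A₀ := by simp
  have hdetD0 : ((fun t : ℝ => A₀ + t • A₁ + t ^ 2 • A t) 0).det ≠ 0 := by
    rw [hD0]; exact ne_of_gt hA₀pd.det_pos
  have hdetDc : ContinuousAt (fun t : ℝ => (A₀ + t • A₁ + t ^ 2 • A t).det) 0 :=
    (continuous_id.matrix_det.continuousAt).comp hDc
  have hDinvc : ContinuousAt (fun t : ℝ => (A₀ + t • A₁ + t ^ 2 • A t)⁻¹) 0 := by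
    refine (continuousAt_matrix_inv _ ?_).comp hDc
    rw [Ring.inverse_eq_inv']
    exact continuousAt_inv₀ hdetD0
  have hXc : ContinuousAt (fun t : ℝ => C₀ + t • C t) 0 :=
    continuousAt_const.add (continuousAt_id.smul hCc)
  have hMc : ContinuousAt
      (fun t : ℝ => B t - (C₀ + t • C t)ᵀ * (A₀ + t • A₁ + t ^ 2 • A t)⁻¹ * (C₀ + t • C t)) 0 :=
    hBc.sub (auxContAt_matrix_mul (auxContAt_matrix_mul (auxContAt_transpose hXc) hDinvc) hXc)
  have hM0 : (fun t : ℝ =>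
      B t - (C₀ + t • C t)ᵀ * (A₀ + t • A₁ + t ^ 2 • A t)⁻¹ * (C₀ + t • C t)) 0
      = B 0 - C₀ᵀ * A₀⁻¹ * C₀ := by simp
  have hNc : ContinuousAt (fun t : ℝ => (1 : Matrix (Fin ℓ) (Fin ℓ) ℝ) +
      t ^ 2 • (B t - (C₀ + t • C t)ᵀ * (A₀ + t • A₁ + t ^ 2 • A t)⁻¹ * (C₀ + t • C t))) 0 :=
    continuousAt_const.add ((continuousAt_id.pow 2).smul hMc)
  have hN0 : (fun t : ℝ => (1 : Matrix (Fin ℓ) (Fin ℓ) ℝ) +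
      t ^ 2 • (B t - (C₀ + t • C t)ᵀ * (A₀ + t • A₁ + t ^ 2 • A t)⁻¹ * (C₀ + t • C t))) 0
      = 1 := by simp
  have hdetN0 : ((fun t : ℝ => (1 : Matrix (Fin ℓ) (Fin ℓ) ℝ) +
      t ^ 2 • (B t - (C₀ + t • C t)ᵀ * (A₀ + t • A₁ + t ^ 2 • A t)⁻¹ * (C₀ + t • C t))) 0).det
      ≠ 0 := by rw [hN0, det_one]; exact one_ne_zero
  have hdetNc : ContinuousAt (fun t : ℝ => ((1 : Matrix (Fin ℓ) (Fin ℓ) ℝ) +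
      t ^ 2 • (B t - (C₀ + t • C t)ᵀ * (A₀ + t • A₁ + t ^ 2 • A t)⁻¹ * (C₀ + t • C t))).det) 0 :=
    (continuous_id.matrix_det.continuousAt).comp hNc
  have hNinvc : ContinuousAt (fun t : ℝ => ((1 : Matrix (Fin ℓ) (Fin ℓ) ℝ) +
      t ^ 2 • (B t - (C₀ + t • C t)ᵀ * (A₀ + t • A₁ + t ^ 2 • A t)⁻¹ * (C₀ + t • C t)))⁻¹) 0 := by
    refine (continuousAt_matrix_inv _ ?_).comp hNc
    rw [Ring.inverse_eq_inv']
    exact continuousAt_inv₀ hdetN0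
  -- choose ε
  have hev : ∀ᶠ t in 𝓝 (0 : ℝ), (A₀ + t • A₁ + t ^ 2 • A t).det ≠ 0 ∧
      ((1 : Matrix (Fin ℓ) (Fin ℓ) ℝ) +
        t ^ 2 • (B t - (C₀ + t • C t)ᵀ * (A₀ + t • A₁ + t ^ 2 • A t)⁻¹ * (C₀ + t • C t))).det
        ≠ 0 :=
    (hdetDc.eventually_ne hdetD0).and (hdetNc.eventually_ne hdetN0)
  rw [Metric.eventually_nhds_iff] at hev
  obtain ⟨ε, hε, hball⟩ := hev
  -- the key algebraic fact for each 0 < t < ε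
  have key : ∀ t ∈ Ioo (0 : ℝ) ε, IsUnit (P t) ∧ ((P t)⁻¹).toBlocks₁₁ =
      (t ^ 2)⁻¹ • ((1 : Matrix (Fin ℓ) (Fin ℓ) ℝ) +
        t ^ 2 • (B t - (C₀ + t • C t)ᵀ * (A₀ + t • A₁ + t ^ 2 • A t)⁻¹ * (C₀ + t • C t)))⁻¹ := by
    intro t ht
    obtain ⟨ht0, htε⟩ := ht
    have hd : dist t 0 < ε := by rw [Real.dist_eq, sub_zero, abs_of_pos ht0]; exact htε
    obtain ⟨hdD, hdN⟩ := hball hd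
    have ht2 : (t : ℝ) ^ 2 ≠ 0 := pow_ne_zero 2 (ne_of_gt ht0)
    haveI iD : Invertible (A₀ + t • A₁ + t ^ 2 • A t) :=
      (A₀ + t • A₁ + t ^ 2 • A t).invertibleOfIsUnitDet (isUnit_iff_ne_zero.2 hdD)
    have hinvOfD : ⅟(A₀ + t • A₁ + t ^ 2 • A t) = (A₀ + t • A₁ + t ^ 2 • A t)⁻¹ :=
      invOf_eq_nonsing_inv _
    have hXeq : t ^ 2 • C₀ + t ^ 3 • C t = t ^ 2 • (C₀ + t • C t) := by
      rw [smul_add, smul_smul, ← pow_succ]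
    have h22 : (t : ℝ) ^ 2 * t ^ 2 = t ^ 4 := by ring
    have hS : (t ^ 2 • (1 : Matrix (Fin ℓ) (Fin ℓ) ℝ) + t ^ 4 • B t) -
        (t ^ 2 • C₀ + t ^ 3 • C t)ᵀ * ⅟(A₀ + t • A₁ + t ^ 2 • A t) *
          (t ^ 2 • C₀ + t ^ 3 • C t)
        = t ^ 2 • ((1 : Matrix (Fin ℓ) (Fin ℓ) ℝ) +
            t ^ 2 • (B t - (C₀ + t • C t)ᵀ * (A₀ + t • A₁ + t ^ 2 • A t)⁻¹ * (C₀ + t • C t))) := by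
      rw [hinvOfD, hXeq, transpose_smul, Matrix.smul_mul, Matrix.smul_mul, Matrix.mul_smul]
      simp only [smul_add, smul_sub, smul_smul, h22]
      abel
    have hdetS : IsUnit ((t ^ 2 • ((1 : Matrix (Fin ℓ) (Fin ℓ) ℝ) +
        t ^ 2 • (B t - (C₀ + t • C t)ᵀ * (A₀ + t • A₁ + t ^ 2 • A t)⁻¹ *
          (C₀ + t • C t)))).det) := by
      rw [Matrix.det_smul]
      exact isUnit_iff_ne_zero.2 (mul_ne_zero (pow_ne_zero _ ht2) hdN)
    haveI iS0 : Invertible (t ^ 2 • ((1 : Matrix (Fin ℓ) (Fin ℓ) ℝ) +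
        t ^ 2 • (B t - (C₀ + t • C t)ᵀ * (A₀ + t • A₁ + t ^ 2 • A t)⁻¹ * (C₀ + t • C t)))) :=
      Matrix.invertibleOfIsUnitDet _ hdetS
    haveI iS : Invertible ((t ^ 2 • (1 : Matrix (Fin ℓ) (Fin ℓ) ℝ) + t ^ 4 • B t) -
        (t ^ 2 • C₀ + t ^ 3 • C t)ᵀ * ⅟(A₀ + t • A₁ + t ^ 2 • A t) *
          (t ^ 2 • C₀ + t ^ 3 • C t)) := by
      rw [hS]; exact iS0
    haveI iP : Invertible (P t) := by
      rw [hP t]; exact fromBlocks₂₂Invertible _ _ _ _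
    refine ⟨isUnit_of_invertible _, ?_⟩
    -- compute the (1,1) block of the inverse
    haveI iPB : Invertible (Matrix.fromBlocks
        (t ^ 2 • (1 : Matrix (Fin ℓ) (Fin ℓ) ℝ) + t ^ 4 • B t)
        (t ^ 2 • C₀ + t ^ 3 • C t)ᵀ
        (t ^ 2 • C₀ + t ^ 3 • C t)
        (A₀ + t • A₁ + t ^ 2 • A t)) := by
      rw [← hP t]; exact iP
    have hblock := Matrix.invOf_fromBlocks₂₂_eq
      (t ^ 2 • (1 : Matrix (Fin ℓ) (Fin ℓ) ℝ) + t ^ 4 • B t)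
      (t ^ 2 • C₀ + t ^ 3 • C t)ᵀ
      (t ^ 2 • C₀ + t ^ 3 • C t)
      (A₀ + t • A₁ + t ^ 2 • A t)
    have hPinv : (P t)⁻¹ = ⅟(Matrix.fromBlocks
        (t ^ 2 • (1 : Matrix (Fin ℓ) (Fin ℓ) ℝ) + t ^ 4 • B t)
        (t ^ 2 • C₀ + t ^ 3 • C t)ᵀ
        (t ^ 2 • C₀ + t ^ 3 • C t)
        (A₀ + t • A₁ + t ^ 2 • A t)) := by
      rw [hP t, ← invOf_eq_nonsing_inv]
    rw [hPinv, hblock, Matrix.toBlocks_fromBlocks₁₁, invOf_eq_nonsing_inv, hS]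
    -- now show (t^2 • N)⁻¹ = (t^2)⁻¹ • N⁻¹
    refine Matrix.inv_eq_right_inv ?_
    rw [Matrix.smul_mul, Matrix.mul_smul, smul_smul, mul_inv_cancel₀ ht2, one_smul,
      Matrix.mul_nonsing_inv _ (isUnit_iff_ne_zero.2 hdN)]
  refine ⟨ε, hε, fun t ht => (key t ht).1, ?_⟩
  -- the limit
  have hlim0 : Tendsto (fun t : ℝ => -(((1 : Matrix (Fin ℓ) (Fin ℓ) ℝ) +
      t ^ 2 • (B t - (C₀ + t • C t)ᵀ * (A₀ + t • A₁ + t ^ 2 • A t)⁻¹ * (C₀ + t • C t)))⁻¹ *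
        (B t - (C₀ + t • C t)ᵀ * (A₀ + t • A₁ + t ^ 2 • A t)⁻¹ * (C₀ + t • C t))))
      (𝓝[>] (0 : ℝ)) (𝓝 (-(B 0 - C₀ᵀ * A₀⁻¹ * C₀))) := by
    have h1 : ContinuousAt (fun t : ℝ => -(((1 : Matrix (Fin ℓ) (Fin ℓ) ℝ) +
        t ^ 2 • (B t - (C₀ + t • C t)ᵀ * (A₀ + t • A₁ + t ^ 2 • A t)⁻¹ * (C₀ + t • C t)))⁻¹ *
          (B t - (C₀ + t • C t)ᵀ * (A₀ + t • A₁ + t ^ 2 • A t)⁻¹ * (C₀ + t • C t)))) 0 :=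
      (auxContAt_matrix_mul hNinvc hMc).neg
    have h2 := Filter.Tendsto.mono_left h1 (nhdsWithin_le_nhds (s := Set.Ioi (0:ℝ)))
    beta_reduce at h2
    have h3 : -(((1 : Matrix (Fin ℓ) (Fin ℓ) ℝ) +
        (0:ℝ) ^ 2 • (B 0 - (C₀ + (0:ℝ) • C 0)ᵀ * (A₀ + (0:ℝ) • A₁ + (0:ℝ) ^ 2 • A 0)⁻¹ *
          (C₀ + (0:ℝ) • C 0)))⁻¹ *
        (B 0 - (C₀ + (0:ℝ) • C 0)ᵀ * (A₀ + (0:ℝ) • A₁ + (0:ℝ) ^ 2 • A 0)⁻¹ * (C₀ + (0:ℝ) • C 0)))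
        = -(B 0 - C₀ᵀ * A₀⁻¹ * C₀) := by
      simp
    rw [h3] at h2
    exact h2
  refine Tendsto.congr' ?_ hlim0
  refine Filter.eventuallyEq_of_mem (Ioo_mem_nhdsGT_of_mem ⟨le_refl (0:ℝ), hε⟩) ?_
  intro t ht
  beta_reduce
  obtain ⟨ht0, htε⟩ := ht
  have hd : dist t 0 < ε := by rw [Real.dist_eq, sub_zero, abs_of_pos ht0]; exact htε
  obtain ⟨hdD, hdN⟩ := hball hd
  have ht2 : (t : ℝ) ^ 2 ≠ 0 := pow_ne_zero 2 (ne_of_gt ht0)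
  have hNN : ((1 : Matrix (Fin ℓ) (Fin ℓ) ℝ) +
      t ^ 2 • (B t - (C₀ + t • C t)ᵀ * (A₀ + t • A₁ + t ^ 2 • A t)⁻¹ * (C₀ + t • C t)))⁻¹ *
      ((1 : Matrix (Fin ℓ) (Fin ℓ) ℝ) +
      t ^ 2 • (B t - (C₀ + t • C t)ᵀ * (A₀ + t • A₁ + t ^ 2 • A t)⁻¹ * (C₀ + t • C t))) = 1 :=
    Matrix.nonsing_inv_mul _ (isUnit_iff_ne_zero.2 hdN)
  have e2 : (1 : Matrix (Fin ℓ) (Fin ℓ) ℝ) - ((1 : Matrix (Fin ℓ) (Fin ℓ) ℝ) +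
      t ^ 2 • (B t - (C₀ + t • C t)ᵀ * (A₀ + t • A₁ + t ^ 2 • A t)⁻¹ * (C₀ + t • C t)))⁻¹
      = t ^ 2 • (((1 : Matrix (Fin ℓ) (Fin ℓ) ℝ) +
        t ^ 2 • (B t - (C₀ + t • C t)ᵀ * (A₀ + t • A₁ + t ^ 2 • A t)⁻¹ * (C₀ + t • C t)))⁻¹ *
        (B t - (C₀ + t • C t)ᵀ * (A₀ + t • A₁ + t ^ 2 • A t)⁻¹ * (C₀ + t • C t))) := by
    have hsub : ((1 : Matrix (Fin ℓ) (Fin ℓ) ℝ) +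
        t ^ 2 • (B t - (C₀ + t • C t)ᵀ * (A₀ + t • A₁ + t ^ 2 • A t)⁻¹ * (C₀ + t • C t)))⁻¹ *
        (((1 : Matrix (Fin ℓ) (Fin ℓ) ℝ) +
        t ^ 2 • (B t - (C₀ + t • C t)ᵀ * (A₀ + t • A₁ + t ^ 2 • A t)⁻¹ * (C₀ + t • C t))) - 1)
        = 1 - ((1 : Matrix (Fin ℓ) (Fin ℓ) ℝ) +
        t ^ 2 • (B t - (C₀ + t • C t)ᵀ * (A₀ + t • A₁ + t ^ 2 • A t)⁻¹ * (C₀ + t • C t)))⁻¹ := by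
      rw [Matrix.mul_sub, hNN, Matrix.mul_one]
    rw [← hsub, add_sub_cancel_left, Matrix.mul_smul]
  rw [(key t ⟨ht0, htε⟩).2, ← smul_sub,
    ← neg_sub (1 : Matrix (Fin ℓ) (Fin ℓ) ℝ)
      (((1 : Matrix (Fin ℓ) (Fin ℓ) ℝ) +
        t ^ 2 • (B t - (C₀ + t • C t)ᵀ * (A₀ + t • A₁ + t ^ 2 • A t)⁻¹ * (C₀ + t • C t)))⁻¹),
    e2, smul_neg, smul_smul, inv_mul_cancel₀ ht2, one_smul]
end

section
/- There exists ε > 0 such that P(t) is invertible for all t ∈ (0, ε), and the m×m block of the inverse satisfies lim_{t→0⁺} (P(t)⁻¹)_{mm} = A₀⁻¹ and lim_{t→0⁺} t⁻¹·( (P(t)⁻¹)_{mm} − A₀⁻¹ ) = −A₀⁻¹A₁A₀⁻¹. -/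
open Matrix Set Filter Topology

/-- mm-block of P(t)⁻¹ tends to A₀⁻¹, with first-order term −A₀⁻¹A₁A₀⁻¹. -/
theorem mm_block_of_inverse_limit
    (ℓ m : ℕ) (hℓ : 1 ≤ ℓ) (hm : 1 ≤ m)
    (A₀ A₁ : Matrix (Fin m) (Fin m) ℝ)
    (C₀ : Matrix (Fin m) (Fin ℓ) ℝ)
    (hA₀pd : A₀.PosDef) (hA₀s : A₀.IsSymm) (hA₁s : A₁.IsSymm)
    (A : ℝ → Matrix (Fin m) (Fin m) ℝ)
    (B : ℝ → Matrix (Fin ℓ) (Fin ℓ) ℝ)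
    (C : ℝ → Matrix (Fin m) (Fin ℓ) ℝ)
    (δ : ℝ) (hδ : 0 < δ)
    (hA : ∀ i j, ContDiffOn ℝ (⊤ : ℕ∞) (fun t => A t i j) (Ioo (-δ) δ))
    (hB : ∀ i j, ContDiffOn ℝ (⊤ : ℕ∞) (fun t => B t i j) (Ioo (-δ) δ))
    (hC : ∀ i j, ContDiffOn ℝ (⊤ : ℕ∞) (fun t => C t i j) (Ioo (-δ) δ))
    (hAs : ∀ t, (A t).IsSymm) (hBs : ∀ t, (B t).IsSymm)
    (P : ℝ → Matrix (Fin ℓ ⊕ Fin m) (Fin ℓ ⊕ Fin m) ℝ)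
    (hP : ∀ t, P t = Matrix.fromBlocks
        (t ^ 2 • (1 : Matrix (Fin ℓ) (Fin ℓ) ℝ) + t ^ 4 • B t)
        (t ^ 2 • C₀ + t ^ 3 • C t)ᵀ
        (t ^ 2 • C₀ + t ^ 3 • C t)
        (A₀ + t • A₁ + t ^ 2 • A t)) :
    ∃ ε > (0 : ℝ), (∀ t ∈ Ioo (0 : ℝ) ε, IsUnit (P t)) ∧
      Tendsto (fun t : ℝ => ((P t)⁻¹).toBlocks₂₂) (𝓝[>] (0 : ℝ)) (𝓝 A₀⁻¹) ∧
      Tendsto (fun t : ℝ => t⁻¹ • (((P t)⁻¹).toBlocks₂₂ - A₀⁻¹))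
        (𝓝[>] (0 : ℝ)) (𝓝 (-(A₀⁻¹ * A₁ * A₀⁻¹))) := by
  have hmemδ : Ioo (-δ) δ ∈ 𝓝 (0 : ℝ) := Ioo_mem_nhds (by linarith) hδ
  -- entrywise continuity at 0
  have hAc : ContinuousAt A 0 := by
    refine continuousAt_pi.mpr ?_; intro i; refine continuousAt_pi.mpr ?_; intro j
    exact ((hA i j).continuousOn.continuousAt hmemδ)
  have hBc : ContinuousAt B 0 := by
    refine continuousAt_pi.mpr ?_; intro i; refine continuousAt_pi.mpr ?_; intro j
    exact ((hB i j).continuousOn.continuousAt hmemδ)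
  have hCc : ContinuousAt C 0 := by
    refine continuousAt_pi.mpr ?_; intro i; refine continuousAt_pi.mpr ?_; intro j
    exact ((hC i j).continuousOn.continuousAt hmemδ)
  -- auxiliary matrix functions
  set N : ℝ → Matrix (Fin ℓ) (Fin ℓ) ℝ :=
    fun t => (1 : Matrix (Fin ℓ) (Fin ℓ) ℝ) + t ^ 2 • B t with hNdef
  set Mm : ℝ → Matrix (Fin m) (Fin ℓ) ℝ := fun t => C₀ + t • C t with hMdef
  set R : ℝ → Matrix (Fin m) (Fin m) ℝ :=
    fun t => A t - Mm t * (N t)⁻¹ * (Mm t)ᵀ with hRdef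
  set S : ℝ → Matrix (Fin m) (Fin m) ℝ :=
    fun t => A₀ + t • A₁ + t ^ 2 • R t with hSdef
  have hN0 : N 0 = 1 := by simp [hNdef]
  have hNc : ContinuousAt N 0 :=
    continuousAt_const.add ((continuousAt_id.pow 2).smul hBc)
  have hMc : ContinuousAt Mm 0 := continuousAt_const.add (continuousAt_id.smul hCc)
  have hNinvc : ContinuousAt (fun t => (N t)⁻¹) 0 := by
    have h1 : ContinuousAt Inv.inv (N 0) := by
      apply continuousAt_matrix_inv
      rw [hN0, det_one, Ring.inverse_eq_inv']
      exact continuousAt_inv₀ one_ne_zero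
    exact h1.comp hNc
  have hF : Continuous (fun p : Matrix (Fin m) (Fin m) ℝ ×
      Matrix (Fin m) (Fin ℓ) ℝ × Matrix (Fin ℓ) (Fin ℓ) ℝ =>
      p.1 - p.2.1 * p.2.2 * p.2.1ᵀ) :=
    continuous_fst.sub (((continuous_fst.comp continuous_snd).matrix_mul
      (continuous_snd.comp continuous_snd)).matrix_mul
      (continuous_fst.comp continuous_snd).matrix_transpose)
  have hRc : ContinuousAt R 0 :=
    ContinuousAt.comp (f := fun t => (A t, Mm t, (N t)⁻¹)) hF.continuousAt (ContinuousAt.prodMk hAc (ContinuousAt.prodMk hMc hNinvc))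
  have hSc : ContinuousAt S 0 :=
    (continuousAt_const.add (continuousAt_id.smul continuousAt_const)).add
      ((continuousAt_id.pow 2).smul hRc)
  have hS0 : S 0 = A₀ := by simp [hSdef]
  have hdetA₀ : A₀.det ≠ 0 := ne_of_gt hA₀pd.det_pos
  -- eventually the determinants are units
  have hcontdet : Continuous fun M : Matrix (Fin ℓ) (Fin ℓ) ℝ => M.det :=
    continuous_id.matrix_det
  have hcontdet' : Continuous fun M : Matrix (Fin m) (Fin m) ℝ => M.det :=
    continuous_id.matrix_det
  have hNdetT : Tendsto (fun t => (N t).det) (𝓝 0) (𝓝 1) := by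
    have := hcontdet.continuousAt.comp hNc
    simpa [hN0, Function.comp_def] using this.tendsto
  have hSdetT : Tendsto (fun t => (S t).det) (𝓝 0) (𝓝 A₀.det) := by
    have := hcontdet'.continuousAt.comp hSc
    simpa [hS0, Function.comp_def] using this.tendsto
  have hNev : ∀ᶠ t in 𝓝 (0 : ℝ), IsUnit (N t).det :=
    (hNdetT.eventually_ne one_ne_zero).mono fun t h => isUnit_iff_ne_zero.mpr h
  have hSev : ∀ᶠ t in 𝓝 (0 : ℝ), IsUnit (S t).det :=
    (hSdetT.eventually_ne hdetA₀).mono fun t h => isUnit_iff_ne_zero.mpr h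
  -- rewrite P in factored form
  have hPform : ∀ t : ℝ, P t = fromBlocks (t ^ 2 • N t) (t ^ 2 • Mm t)ᵀ
      (t ^ 2 • Mm t) (A₀ + t • A₁ + t ^ 2 • A t) := by
    intro t
    have h1 : t ^ 2 • (1 : Matrix (Fin ℓ) (Fin ℓ) ℝ) + t ^ 4 • B t = t ^ 2 • N t := by
      rw [hNdef]; rw [smul_add, smul_smul, ← pow_add]
    have h2 : t ^ 2 • C₀ + t ^ 3 • C t = t ^ 2 • Mm t := by
      rw [hMdef]; rw [smul_add, smul_smul, ← pow_succ]
    rw [hP t, h1, h2]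
  -- the key invertibility and block-inverse computation
  have key : ∀ t : ℝ, t ≠ 0 → IsUnit (N t).det → IsUnit (S t).det →
      IsUnit (P t) ∧ ((P t)⁻¹).toBlocks₂₂ = (S t)⁻¹ := by
    intro t ht hNu hSu
    have ht2 : (t ^ 2 : ℝ) ≠ 0 := pow_ne_zero _ ht
    letI iN : Invertible (N t) := (N t).invertibleOfIsUnitDet hNu
    letI ik : Invertible (t ^ 2 : ℝ) := invertibleOfNonzero ht2
    letI i11 : Invertible (t ^ 2 • N t) := (t ^ 2 • N t).invertibleOfIsUnitDet (by
      rw [det_smul]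
      exact ((isUnit_iff_ne_zero.mpr ht2).pow _).mul hNu)
    have hinv11 : ⅟ (t ^ 2 • N t) = (t ^ 2)⁻¹ • (N t)⁻¹ := by
      rw [invOf_eq_nonsing_inv, Matrix.inv_smul (N t) (t ^ 2) hNu, invOf_eq_inv]
    have hcoef : t ^ 2 * ((t ^ 2)⁻¹ * t ^ 2) = t ^ 2 := by field_simp
    have hSchur : (A₀ + t • A₁ + t ^ 2 • A t) -
        (t ^ 2 • Mm t) * ⅟ (t ^ 2 • N t) * (t ^ 2 • Mm t)ᵀ = S t := by
      rw [hinv11, hSdef, hRdef]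
      simp only [transpose_smul, Matrix.smul_mul, Matrix.mul_smul, smul_smul, hcoef, smul_sub]
      abel
    letI iS : Invertible ((A₀ + t • A₁ + t ^ 2 • A t) -
        (t ^ 2 • Mm t) * ⅟ (t ^ 2 • N t) * (t ^ 2 • Mm t)ᵀ) := by
      rw [hSchur]; exact (S t).invertibleOfIsUnitDet hSu
    letI iP : Invertible (fromBlocks (t ^ 2 • N t) (t ^ 2 • Mm t)ᵀ
        (t ^ 2 • Mm t) (A₀ + t • A₁ + t ^ 2 • A t)) :=
      fromBlocks₁₁Invertible _ _ _ _
    constructor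
    · rw [hPform t]; exact isUnit_of_invertible _
    · rw [hPform t, ← invOf_eq_nonsing_inv, invOf_fromBlocks₁₁_eq, toBlocks_fromBlocks₂₂,
        invOf_eq_nonsing_inv, hSchur]
  -- eventual facts along 𝓝[>] 0
  have hEv0 : ∀ᶠ t in 𝓝[>] (0 : ℝ), t ≠ 0 ∧ IsUnit (N t).det ∧ IsUnit (S t).det := by
    filter_upwards [eventually_mem_nhdsWithin, (hNev.and hSev).filter_mono nhdsWithin_le_nhds]
      with t ht h2
    exact ⟨ne_of_gt ht, h2.1, h2.2⟩
  have hEv : ∀ᶠ t in 𝓝[>] (0 : ℝ),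
      IsUnit (P t) ∧ ((P t)⁻¹).toBlocks₂₂ = (S t)⁻¹ :=
    hEv0.mono fun t h => key t h.1 h.2.1 h.2.2
  obtain ⟨u, hu, hsub⟩ := mem_nhdsGT_iff_exists_Ioo_subset.mp hEv
  -- limit 1
  have hT1 : Tendsto (fun t => (S t)⁻¹) (𝓝[>] (0 : ℝ)) (𝓝 A₀⁻¹) := by
    have h1 : ContinuousAt Inv.inv A₀ := by
      apply continuousAt_matrix_inv
      rw [Ring.inverse_eq_inv']
      exact continuousAt_inv₀ hdetA₀
    have h2 : Tendsto S (𝓝[>] (0 : ℝ)) (𝓝 A₀) := by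
      have := hSc.tendsto.mono_left (nhdsWithin_le_nhds (s := Ioi (0:ℝ)))
      rwa [hS0] at this
    exact h1.tendsto.comp h2
  -- limit 2 : eventual algebraic identity
  have hA₀u : IsUnit A₀.det := isUnit_iff_ne_zero.mpr hdetA₀
  have hEq2 : ∀ᶠ t in 𝓝[>] (0 : ℝ),
      t⁻¹ • (((P t)⁻¹).toBlocks₂₂ - A₀⁻¹) = -((S t)⁻¹ * (A₁ + t • R t) * A₀⁻¹) := by
    filter_upwards [hEv0, hEv] with t h0 hPt
    obtain ⟨ht, hNu, hSu⟩ := h0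
    rw [hPt.2]
    have hsub' : (S t)⁻¹ - A₀⁻¹ = (S t)⁻¹ * (A₀ - S t) * A₀⁻¹ := by
      rw [Matrix.mul_sub, Matrix.sub_mul, Matrix.mul_nonsing_inv_cancel_right A₀ _ hA₀u,
        Matrix.nonsing_inv_mul _ hSu, Matrix.one_mul]
    have e2 : A₀ - S t = (-t) • (A₁ + t • R t) := by
      rw [hSdef]
      simp only [smul_add, smul_smul]
      rw [show -t * t = -(t ^ 2) by ring, neg_smul, neg_smul]
      abel
    rw [hsub', e2, Matrix.mul_smul, Matrix.smul_mul, smul_smul,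
      show t⁻¹ * -t = -1 by field_simp, neg_one_smul]
  have hlim : Tendsto (fun t => -((S t)⁻¹ * (A₁ + t • R t) * A₀⁻¹)) (𝓝[>] (0 : ℝ))
      (𝓝 (-(A₀⁻¹ * A₁ * A₀⁻¹))) := by
    have h3 : Tendsto (fun t : ℝ => A₁ + t • R t) (𝓝[>] (0 : ℝ)) (𝓝 A₁) := by
      have hc : ContinuousAt (fun t : ℝ => A₁ + t • R t) 0 :=
        continuousAt_const.add (continuousAt_id.smul hRc)
      have := hc.tendsto.mono_left (nhdsWithin_le_nhds (s := Ioi (0:ℝ)))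
      simpa using this
    exact ((hT1.mul h3).mul tendsto_const_nhds).neg
  refine ⟨u, hu, fun t ht => (hsub ht).1, ?_, ?_⟩
  · exact hT1.congr' (hEv.mono fun t h => h.2.symm)
  · exact hlim.congr' (hEq2.mono fun t h => h.symm)
end

section
/- There exists ε > 0 such that P(t) is invertible for all t ∈ (0, ε), and the m×ℓ off-diagonal block of the inverse satisfies lim_{t→0⁺} (P(t)⁻¹)_{mp} = −A₀⁻¹C₀. -/
open Matrix Set Filter Topology

/-- mp-block of P(t)⁻¹ tends to −A₀⁻¹C₀. -/
theorem mp_block_of_inverse_limit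
    (ℓ m : ℕ) (hℓ : 1 ≤ ℓ) (hm : 1 ≤ m)
    (A₀ A₁ : Matrix (Fin m) (Fin m) ℝ)
    (C₀ : Matrix (Fin m) (Fin ℓ) ℝ)
    (hA₀pd : A₀.PosDef) (hA₀s : A₀.IsSymm) (hA₁s : A₁.IsSymm)
    (A : ℝ → Matrix (Fin m) (Fin m) ℝ)
    (B : ℝ → Matrix (Fin ℓ) (Fin ℓ) ℝ)
    (C : ℝ → Matrix (Fin m) (Fin ℓ) ℝ)
    (δ : ℝ) (hδ : 0 < δ)
    (hA : ∀ i j, ContDiffOn ℝ (⊤ : ℕ∞) (fun t => A t i j) (Ioo (-δ) δ))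
    (hB : ∀ i j, ContDiffOn ℝ (⊤ : ℕ∞) (fun t => B t i j) (Ioo (-δ) δ))
    (hC : ∀ i j, ContDiffOn ℝ (⊤ : ℕ∞) (fun t => C t i j) (Ioo (-δ) δ))
    (hAs : ∀ t, (A t).IsSymm) (hBs : ∀ t, (B t).IsSymm)
    (P : ℝ → Matrix (Fin ℓ ⊕ Fin m) (Fin ℓ ⊕ Fin m) ℝ)
    (hP : ∀ t, P t = Matrix.fromBlocks
        (t ^ 2 • (1 : Matrix (Fin ℓ) (Fin ℓ) ℝ) + t ^ 4 • B t)
        (t ^ 2 • C₀ + t ^ 3 • C t)ᵀ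
        (t ^ 2 • C₀ + t ^ 3 • C t)
        (A₀ + t • A₁ + t ^ 2 • A t)) :
    ∃ ε > (0 : ℝ), (∀ t ∈ Ioo (0 : ℝ) ε, IsUnit (P t)) ∧
      Tendsto (fun t : ℝ => ((P t)⁻¹).toBlocks₂₁) (𝓝[>] (0 : ℝ)) (𝓝 (-(A₀⁻¹ * C₀))) := by
  have hmem : Ioo (-δ) δ ∈ 𝓝 (0 : ℝ) := Ioo_mem_nhds (neg_lt_zero.mpr hδ) hδ
  have hAc : ContinuousAt A 0 := continuousAt_pi.2 fun i => continuousAt_pi.2 fun j =>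
    (hA i j).continuousOn.continuousAt hmem
  have hBc : ContinuousAt B 0 := continuousAt_pi.2 fun i => continuousAt_pi.2 fun j =>
    (hB i j).continuousOn.continuousAt hmem
  have hCc : ContinuousAt C 0 := continuousAt_pi.2 fun i => continuousAt_pi.2 fun j =>
    (hC i j).continuousOn.continuousAt hmem
  set W : ℝ → Matrix (Fin ℓ) (Fin ℓ) ℝ := fun t => 1 + t ^ 2 • B t with hWdef
  set S : ℝ → Matrix (Fin m) (Fin m) ℝ := fun t =>
    A₀ + t • A₁ + t ^ 2 • A t - t ^ 2 • ((C₀ + t • C t) * (W t)⁻¹ * (C₀ + t • C t)ᵀ) with hSdef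
  set g : ℝ → Matrix (Fin m) (Fin ℓ) ℝ := fun t =>
    -((S t)⁻¹ * (C₀ + t • C t) * (W t)⁻¹) with hgdef
  have hW0 : W 0 = 1 := by simp [hWdef]
  have hWc : ContinuousAt W 0 := continuousAt_const.add ((continuousAt_id.pow 2).smul hBc)
  have hdetW0 : (W 0).det = 1 := by rw [hW0, det_one]
  have hWinvc : ContinuousAt (fun t => (W t)⁻¹) 0 := by
    refine (continuousAt_matrix_inv (W 0) ?_).comp hWc
    rw [hdetW0]
    simpa using NormedRing.inverse_continuousAt (1 : ℝˣ)
  have hCt : ContinuousAt (fun t => C₀ + t • C t) 0 :=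
    continuousAt_const.add (continuousAt_id.smul hCc)
  have hCtT : ContinuousAt (fun t => (C₀ + t • C t)ᵀ) 0 :=
    ((continuous_id.matrix_transpose).continuousAt).comp hCt
  have hmulc : ∀ {k n p : ℕ} (f : ℝ → Matrix (Fin k) (Fin n) ℝ)
      (h : ℝ → Matrix (Fin n) (Fin p) ℝ), ContinuousAt f 0 → ContinuousAt h 0 →
      ContinuousAt (fun t => f t * h t) 0 := by
    intro k n p f h hf hh
    exact ((continuous_fst.matrix_mul continuous_snd).continuousAt).comp (hf.prodMk hh)
  have hSc : ContinuousAt S 0 :=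
    ((continuousAt_const.add (continuousAt_id.smul continuousAt_const)).add
      ((continuousAt_id.pow 2).smul hAc)).sub
      ((continuousAt_id.pow 2).smul (hmulc _ _ (hmulc _ _ hCt hWinvc) hCtT))
  have hS0 : S 0 = A₀ := by simp [hSdef]
  have hdetA₀ : IsUnit A₀.det := hA₀pd.det_pos.ne'.isUnit
  have hSinvc : ContinuousAt (fun t => (S t)⁻¹) 0 := by
    refine (continuousAt_matrix_inv (S 0) ?_).comp hSc
    rw [hS0]
    simpa [hdetA₀.unit_spec] using NormedRing.inverse_continuousAt hdetA₀.unit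
  have hgc : ContinuousAt g 0 := (hmulc _ _ (hmulc _ _ hSinvc hCt) hWinvc).neg
  have hg0 : g 0 = -(A₀⁻¹ * C₀) := by simp [hgdef, hS0, hW0]
  -- eventually both determinants are nonzero
  have hdetWc : ContinuousAt (fun t => (W t).det) 0 :=
    (continuous_id.matrix_det.continuousAt).comp hWc
  have hdetSc : ContinuousAt (fun t => (S t).det) 0 :=
    (continuous_id.matrix_det.continuousAt).comp hSc
  have hev : ∀ᶠ t in 𝓝 (0 : ℝ), (W t).det ≠ 0 ∧ (S t).det ≠ 0 := by
    refine (hdetWc.eventually_ne ?_).and (hdetSc.eventually_ne ?_)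
    · rw [hdetW0]; exact one_ne_zero
    · rw [hS0]; exact hA₀pd.det_pos.ne'
  obtain ⟨ε, hε, hball⟩ := Metric.eventually_nhds_iff.mp hev
  have key : ∀ t : ℝ, 0 < t → dist t (0 : ℝ) < ε →
      IsUnit (P t) ∧ ((P t)⁻¹).toBlocks₂₁ = g t := by
    intro t ht hdist
    obtain ⟨hWd, hSd⟩ := hball hdist
    have ht2 : (t : ℝ) ^ 2 ≠ 0 := pow_ne_zero _ ht.ne'
    haveI : Invertible (W t) := (W t).invertibleOfIsUnitDet hWd.isUnit
    haveI : Invertible (S t) := (S t).invertibleOfIsUnitDet hSd.isUnit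
    have hdetA' : IsUnit (t ^ 2 • W t).det := by
      rw [det_smul]
      exact (isUnit_iff_ne_zero.2 (pow_ne_zero _ ht2)).mul hWd.isUnit
    haveI : Invertible (t ^ 2 • W t) := (t ^ 2 • W t).invertibleOfIsUnitDet hdetA'
    haveI : Invertible ((t : ℝ) ^ 2) := invertibleOfNonzero ht2
    have hppb : t ^ 2 • (1 : Matrix (Fin ℓ) (Fin ℓ) ℝ) + t ^ 4 • B t = t ^ 2 • W t := by
      have h4 : (t : ℝ) ^ 4 = t ^ 2 * t ^ 2 := by ring
      rw [hWdef, smul_add, smul_smul, ← h4]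
    have hmpb : t ^ 2 • C₀ + t ^ 3 • C t = t ^ 2 • (C₀ + t • C t) := by
      have h3 : (t : ℝ) ^ 3 = t ^ 2 * t := by ring
      rw [smul_add, smul_smul, ← h3]
    have hA'inv : (t ^ 2 • W t)⁻¹ = ((t : ℝ) ^ 2)⁻¹ • (W t)⁻¹ := by
      rw [Matrix.inv_smul (W t) (t ^ 2) hWd.isUnit, invOf_eq_inv]
    have hsmul3 : ∀ (X : Matrix (Fin m) (Fin ℓ) ℝ) (Y : Matrix (Fin ℓ) (Fin ℓ) ℝ),
        (t ^ 2 • X) * (((t : ℝ) ^ 2)⁻¹ • Y) * (t ^ 2 • X)ᵀ = t ^ 2 • (X * Y * Xᵀ) := by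
      intro X Y
      rw [transpose_smul]
      simp only [Matrix.smul_mul, Matrix.mul_smul, smul_smul]
      congr 1
      field_simp
    have hschur : (A₀ + t • A₁ + t ^ 2 • A t) -
        (t ^ 2 • (C₀ + t • C t)) * ⅟ (t ^ 2 • W t) * (t ^ 2 • (C₀ + t • C t))ᵀ = S t := by
      rw [invOf_eq_nonsing_inv, hA'inv, hsmul3, hSdef]
    haveI hSchurInv : Invertible ((A₀ + t • A₁ + t ^ 2 • A t) -
        (t ^ 2 • (C₀ + t • C t)) * ⅟ (t ^ 2 • W t) * (t ^ 2 • (C₀ + t • C t))ᵀ) :=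
      (‹Invertible (S t)›).copy _ hschur
    have hPt : P t = fromBlocks (t ^ 2 • W t) (t ^ 2 • (C₀ + t • C t))ᵀ
        (t ^ 2 • (C₀ + t • C t)) (A₀ + t • A₁ + t ^ 2 • A t) := by
      rw [hP, hppb, hmpb]
    haveI hFBinv : Invertible (fromBlocks (t ^ 2 • W t) (t ^ 2 • (C₀ + t • C t))ᵀ
        (t ^ 2 • (C₀ + t • C t)) (A₀ + t • A₁ + t ^ 2 • A t)) :=
      fromBlocks₁₁Invertible _ _ _ _
    haveI hPinv : Invertible (P t) := hPt ▸ hFBinv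
    refine ⟨isUnit_of_invertible _, ?_⟩
    have hPinvEq : (P t)⁻¹ = fromBlocks
        (⅟ (t ^ 2 • W t) + ⅟ (t ^ 2 • W t) * (t ^ 2 • (C₀ + t • C t))ᵀ *
          ⅟ ((A₀ + t • A₁ + t ^ 2 • A t) -
            (t ^ 2 • (C₀ + t • C t)) * ⅟ (t ^ 2 • W t) * (t ^ 2 • (C₀ + t • C t))ᵀ) *
          (t ^ 2 • (C₀ + t • C t)) * ⅟ (t ^ 2 • W t))
        (-(⅟ (t ^ 2 • W t) * (t ^ 2 • (C₀ + t • C t))ᵀ *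
          ⅟ ((A₀ + t • A₁ + t ^ 2 • A t) -
            (t ^ 2 • (C₀ + t • C t)) * ⅟ (t ^ 2 • W t) * (t ^ 2 • (C₀ + t • C t))ᵀ)))
        (-(⅟ ((A₀ + t • A₁ + t ^ 2 • A t) -
            (t ^ 2 • (C₀ + t • C t)) * ⅟ (t ^ 2 • W t) * (t ^ 2 • (C₀ + t • C t))ᵀ) *
          (t ^ 2 • (C₀ + t • C t)) * ⅟ (t ^ 2 • W t)))
        (⅟ ((A₀ + t • A₁ + t ^ 2 • A t) -
            (t ^ 2 • (C₀ + t • C t)) * ⅟ (t ^ 2 • W t) * (t ^ 2 • (C₀ + t • C t))ᵀ)) := by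
      rw [hPt, ← invOf_eq_nonsing_inv]
      exact invOf_fromBlocks₁₁_eq _ _ _ _
    rw [hPinvEq]
    rw [toBlocks_fromBlocks₂₁]
    have hinvS : ⅟ ((A₀ + t • A₁ + t ^ 2 • A t) -
        (t ^ 2 • (C₀ + t • C t)) * ⅟ (t ^ 2 • W t) * (t ^ 2 • (C₀ + t • C t))ᵀ) = (S t)⁻¹ := by
      rw [invOf_eq_nonsing_inv, hschur]
    have hcol : (S t)⁻¹ * (t ^ 2 • (C₀ + t • C t)) * (((t : ℝ) ^ 2)⁻¹ • (W t)⁻¹)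
        = (S t)⁻¹ * (C₀ + t • C t) * (W t)⁻¹ := by
      rw [Matrix.mul_smul, Matrix.mul_smul, Matrix.smul_mul, smul_smul,
        show ((t : ℝ) ^ 2)⁻¹ * t ^ 2 = 1 by field_simp, one_smul]
    rw [hinvS, invOf_eq_nonsing_inv, hA'inv, hcol]
  refine ⟨ε, hε, fun t ht => (key t ht.1 (by
      rw [Real.dist_eq, sub_zero, abs_of_pos ht.1]; exact ht.2)).1, ?_⟩
  have hgl : Tendsto g (𝓝[>] (0 : ℝ)) (𝓝 (-(A₀⁻¹ * C₀))) := by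
    rw [← hg0]
    exact hgc.continuousWithinAt.tendsto
  refine hgl.congr' ?_
  filter_upwards [Ioo_mem_nhdsGT_of_mem (Set.mem_Ico.mpr ⟨le_refl (0:ℝ), hε⟩)] with t ht
  exact ((key t ht.1 (by rw [Real.dist_eq, sub_zero, abs_of_pos ht.1]; exact ht.2)).2).symm
end

section
/- Assume additionally that Q(μ(x,y),z) = −Q(μ(x,z),y) for all x, y, z ∈ V, and that P is diagonal in the basis (e_u), i.e. P e_u = x_u e_u with x_u > 0. Then for every g-orthonormal basis (X_i) of V and all indices u, v: −(1/2)·Σ_i g(μ(X_i, e_u), μ(X_i, e_v)) + (1/4)·Σ_{i,j} g(μ(X_i, X_j), e_u)·g(μ(X_i, X_j), e_v) = Σ_{r,k} ((x_u x_v − 2 x_k²)/(4 x_r x_k))·Γ_{rk}^u Γ_{rk}^v. -/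
/-!
The coordinates of `y` in a `g`-orthonormal basis `(X_i)` are `g(y, X_i) = ⟪P y, X_i⟫`, so for an
eigenvector `P e_k = x_k e_k` we get `∑_i ⟪e_k, X_i⟫ X_i = x_k⁻¹ e_k`. Expanding one argument in the
orthonormal basis `(e_k)`, the `g`-trace `∑_i B(X_i, X_i)` of any bilinear map is therefore
`∑_k x_k⁻¹ B(e_k, e_k)`. One such trace turns the first sum into `∑_{r,k} (x_k / x_r) Γ_{rk}^u Γ_{rk}^v`
(using the skew-symmetry of `μ`), and two of them turn the second into
`∑_{r,k} (x_u x_v / (x_r x_k)) Γ_{rk}^u Γ_{rk}^v`, since `⟪P w, e_u⟫ = x_u ⟪w, e_u⟫`.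
-/

open scoped RealInnerProductSpace
open Finset

section Eigenbasis

variable {V : Type*} [NormedAddCommGroup V] [InnerProductSpace ℝ V]
  {κ : Type*} [Fintype κ] {P : V →ₗ[ℝ] V}
  (b : OrthonormalBasis κ ℝ V) {x : κ → ℝ} (hPb : ∀ k, P (b k) = x k • b k)

section Diagonal

include hPb

theorem inner_apply_eq_sum_of_diagonal (y z : V) :
    ⟪P y, z⟫ = ∑ k, x k * (⟪b k, y⟫ * ⟪b k, z⟫) := by
  conv_lhs => rw [← b.sum_repr' y]
  simp only [map_sum, map_smul, hPb, sum_inner, real_inner_smul_left]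
  exact sum_congr rfl fun k _ => by ring

theorem inner_apply_basis_of_diagonal [DecidableEq κ] (y : V) (k : κ) :
    ⟪P y, b k⟫ = x k * ⟪y, b k⟫ := by
  simp only [inner_apply_eq_sum_of_diagonal b hPb, b.inner_eq_ite, mul_ite, mul_one, mul_zero,
    sum_ite_eq', mem_univ, if_true, real_inner_comm]

end Diagonal

section GOrthonormal

variable {ι : Type*} [Fintype ι] [DecidableEq ι]
  {X : Module.Basis ι ℝ V} (hX : ∀ i j, ⟪P (X i), X j⟫ = if i = j then (1 : ℝ) else 0)
include hX

theorem repr_eq_inner_apply_of_orthonormal (y : V) (i : ι) : X.repr y i = ⟪P y, X i⟫ := by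
  conv_rhs => rw [← X.sum_repr y]
  simp only [map_sum, map_smul, sum_inner, real_inner_smul_left, hX, mul_ite, mul_one, mul_zero,
    sum_ite_eq', mem_univ, if_true]

theorem sum_inner_apply_smul_eq_self (y : V) : ∑ i, ⟪P y, X i⟫ • X i = y := by
  simpa only [repr_eq_inner_apply_of_orthonormal hX] using X.sum_repr y

theorem sum_inner_smul_eq_of_eigenvector {y : V} {c : ℝ} (hPy : P y = c • y) (hc : c ≠ 0) :
    ∑ i, ⟪y, X i⟫ • X i = c⁻¹ • y := by
  rw [eq_inv_smul_iff₀ hc, smul_sum]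
  conv_rhs => rw [← sum_inner_apply_smul_eq_self hX y]
  simp only [hPy, real_inner_smul_left, smul_smul]

variable (hx : ∀ k, x k ≠ 0)
include hPb hx

theorem sum_apply_self_eq_sum_inv_smul {M : Type*} [AddCommGroup M] [Module ℝ M]
    (B : V →ₗ[ℝ] V →ₗ[ℝ] M) :
    ∑ i, B (X i) (X i) = ∑ k, (x k)⁻¹ • B (b k) (b k) := calc
  ∑ i, B (X i) (X i) = ∑ i, ∑ k, ⟪b k, X i⟫ • B (b k) (X i) := by
    refine sum_congr rfl fun i _ => ?_
    nth_rewrite 1 [← b.sum_repr' (X i)]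
    simp only [map_sum, map_smul, LinearMap.sum_apply, LinearMap.smul_apply]
  _ = ∑ k, B (b k) (∑ i, ⟪b k, X i⟫ • X i) := by
    rw [sum_comm]
    simp only [map_sum, map_smul]
  _ = ∑ k, (x k)⁻¹ • B (b k) (b k) := by
    simp only [sum_inner_smul_eq_of_eigenvector hX (hPb _) (hx _), map_smul]

theorem sum_inner_apply_bilin_eq (β : V →ₗ[ℝ] V →ₗ[ℝ] V) (y z : V) :
    ∑ i, ⟪P (β (X i) y), β (X i) z⟫
      = ∑ r, ∑ k, x k / x r * (⟪b k, β (b r) y⟫ * ⟪b k, β (b r) z⟫) := by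
  have trace := sum_apply_self_eq_sum_inv_smul b hPb hX hx
    ((innerₗ V).compl₁₂ (P ∘ₗ β.flip y) (β.flip z))
  simp only [LinearMap.compl₁₂_apply, LinearMap.comp_apply, LinearMap.flip_apply,
    innerₗ_apply_apply, smul_eq_mul] at trace
  rw [trace]
  simp only [inner_apply_eq_sum_of_diagonal b hPb, mul_sum]
  exact sum_congr rfl fun r _ => sum_congr rfl fun k _ => by ring

theorem sum_sum_inner_bilin_mul_inner_eq (β : V →ₗ[ℝ] V →ₗ[ℝ] V) (y z : V) :
    ∑ i, ∑ j, ⟪β (X i) (X j), y⟫ * ⟪β (X i) (X j), z⟫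
      = ∑ r, ∑ k, (x r * x k)⁻¹ * (⟪β (b r) (b k), y⟫ * ⟪β (b r) (b k), z⟫) := by
  have trace (f : V →ₗ[ℝ] V) : ∑ i, ⟪f (X i), y⟫ * ⟪f (X i), z⟫
      = ∑ k, (x k)⁻¹ * (⟪f (b k), y⟫ * ⟪f (b k), z⟫) := by
    simpa only [LinearMap.compl₁₂_apply, LinearMap.comp_apply, LinearMap.flip_apply,
      innerₗ_apply_apply, LinearMap.mul_apply', smul_eq_mul] using
      sum_apply_self_eq_sum_inv_smul b hPb hX hx
        ((LinearMap.mul ℝ ℝ).compl₁₂ ((innerₗ V).flip y ∘ₗ f) ((innerₗ V).flip z ∘ₗ f))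
  calc ∑ i, ∑ j, ⟪β (X i) (X j), y⟫ * ⟪β (X i) (X j), z⟫
      = ∑ k, (x k)⁻¹ * ∑ i, ⟪β (X i) (b k), y⟫ * ⟪β (X i) (b k), z⟫ := by
        simp only [trace (β _), mul_sum]
        exact sum_comm
    _ = ∑ k, ∑ r, (x k)⁻¹ * ((x r)⁻¹ * (⟪β (b r) (b k), y⟫ * ⟪β (b r) (b k), z⟫)) := by
        refine sum_congr rfl fun k _ => ?_
        simpa only [LinearMap.flip_apply, mul_sum] using
          congrArg ((x k)⁻¹ * ·) (trace (β.flip (b k)))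
    _ = _ := by
        rw [sum_comm]
        exact sum_congr rfl fun r _ => sum_congr rfl fun k _ => by ring

end GOrthonormal

end Eigenbasis

theorem ricci_formula_diagonal_metric_general
    {V : Type*} [NormedAddCommGroup V] [InnerProductSpace ℝ V]
    {ι : Type*} [Fintype ι] [DecidableEq ι]
    (μ : V →ₗ[ℝ] V →ₗ[ℝ] V)
    (P : V →ₗ[ℝ] V)
    (e : Module.Basis ι ℝ V) (he : Orthonormal ℝ (e : ι → V))
    (hskew : ∀ x y z : V, ⟪μ x y, z⟫ = -⟪μ x z, y⟫)
    (x : ι → ℝ) (hx : ∀ u, 0 < x u)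
    (hPdiag : ∀ u, P (e u) = x u • e u) :
    ∀ X : Module.Basis ι ℝ V,
      (∀ i j, ⟪P (X i), X j⟫ = if i = j then (1 : ℝ) else 0) →
      ∀ u v : ι,
        -(1 / 2 : ℝ) * ∑ i, ⟪P (μ (X i) (e u)), μ (X i) (e v)⟫
          + (1 / 4 : ℝ) * ∑ i, ∑ j,
              ⟪P (μ (X i) (X j)), e u⟫ * ⟪P (μ (X i) (X j)), e v⟫
        = ∑ r, ∑ k, ((x u * x v - 2 * (x k) ^ 2) / (4 * x r * x k))
            * ⟪μ (e r) (e k), e u⟫ * ⟪μ (e r) (e k), e v⟫ := by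
  intro X hX u v
  set b := e.toOrthonormalBasis he
  have hb : ⇑b = e := e.coe_toOrthonormalBasis he
  have hPb : ∀ k, P (b k) = x k • b k := by simpa [hb] using hPdiag
  have hxne : ∀ k, x k ≠ 0 := fun k => (hx k).ne'
  have hPe : ∀ w k, ⟪P w, e k⟫ = x k * ⟪w, e k⟫ := by
    simpa [hb] using inner_apply_basis_of_diagonal b hPb
  have hskew_left : ∀ k a y, ⟪e k, μ a y⟫ = -⟪μ a (e k), y⟫ := fun k a y => by
    rw [real_inner_comm, hskew]
  have first := sum_inner_apply_bilin_eq b hPb hX hxne μ (e u) (e v)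
  have second := sum_sum_inner_bilin_mul_inner_eq b hPb hX hxne μ (e u) (e v)
  simp only [hb, hskew_left, neg_mul_neg] at first second
  simp only [hPe, mul_mul_mul_comm (x u), ← mul_sum]
  rw [first, second]
  simp only [mul_sum, ← sum_add_distrib]
  refine sum_congr rfl fun r _ => sum_congr rfl fun k _ => ?_
  field_simp [hxne r, hxne k]
  ring

/-- if moreover `Q(μ(x,y),z) = -Q(μ(x,z),y)` and `P` is diagonal in the
`Q`-orthonormal basis `(e_u)`, i.e. `P e_u = x_u e_u` with `x_u > 0`, then for every
`g`-orthonormal basis `(X_i)` the Ricci-type expression equals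
`Σ_{r,k} ((x_u x_v − 2 x_k²)/(4 x_r x_k))·Γ_{rk}^u Γ_{rk}^v`. -/
theorem ricci_formula_diagonal_metric
    {V : Type*} [NormedAddCommGroup V] [InnerProductSpace ℝ V] [FiniteDimensional ℝ V]
    {ι : Type*} [Fintype ι] [DecidableEq ι]
    (μ : V →ₗ[ℝ] V →ₗ[ℝ] V)
    (P : V →ₗ[ℝ] V)
    (hPsymm : ∀ x y : V, ⟪P x, y⟫ = ⟪x, P y⟫)
    (hPpos : ∀ x : V, x ≠ 0 → 0 < ⟪P x, x⟫)
    (e : Module.Basis ι ℝ V) (he : Orthonormal ℝ (e : ι → V))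
    (hskew : ∀ x y z : V, ⟪μ x y, z⟫ = -⟪μ x z, y⟫)
    (x : ι → ℝ) (hx : ∀ u, 0 < x u)
    (hPdiag : ∀ u, P (e u) = x u • e u) :
    ∀ X : Module.Basis ι ℝ V,
      (∀ i j, ⟪P (X i), X j⟫ = if i = j then (1 : ℝ) else 0) →
      ∀ u v : ι,
        -(1 / 2 : ℝ) * ∑ i, ⟪P (μ (X i) (e u)), μ (X i) (e v)⟫
          + (1 / 4 : ℝ) * ∑ i, ∑ j,
              ⟪P (μ (X i) (X j)), e u⟫ * ⟪P (μ (X i) (X j)), e v⟫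
        = ∑ r, ∑ k, ((x u * x v - 2 * (x k) ^ 2) / (4 * x r * x k))
            * ⟪μ (e r) (e k), e u⟫ * ⟪μ (e r) (e k), e v⟫ :=
  ricci_formula_diagonal_metric_general μ P e he hskew x hx hPdiag
end

section
/- Σ_{u ∈ J₁} [ −Σ_{r∈I} Σ_{p,q∈J} Γ_{rp}^u Γ_{rq}^{F(u)} A_{pq} + (1/2)·Σ_{r∈I} Σ_{p,k∈J} Γ_{rk}^p Γ_{rk}^{F(u)} A_{pu} + (1/2)·Σ_{r∈I} Σ_{p,k∈J} Γ_{rk}^p Γ_{rk}^u A_{p,F(u)} ] = 0. -/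
/-- Abstract cancellation lemma. -/
lemma aux_sum_cancel {R J : Type*} [Fintype R] [Fintype J]
    (γ : R → J → J → ℝ) (hγ : ∀ r i k, γ r i k = -γ r k i) (B : J → J → ℝ) :
    ∑ u : J,
      (-(∑ r, ∑ p, ∑ q, γ r p u * γ r q u * B p q)
        + (1 / 2 : ℝ) * ∑ r, ∑ p, ∑ k, γ r k p * γ r k u * B u p
        + (1 / 2 : ℝ) * ∑ r, ∑ p, ∑ k, γ r k p * γ r k u * B p u) = 0 := by
  have hT' : ∀ r : R, (∑ u, ∑ p, ∑ k, γ r k p * γ r k u * B u p)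
      = ∑ u, ∑ p, ∑ k, γ r k p * γ r k u * B p u := by
    intro r
    rw [Finset.sum_comm]
    exact Finset.sum_congr rfl fun u _ => Finset.sum_congr rfl fun p _ =>
      Finset.sum_congr rfl fun k _ => by ring
  have hswap : ∀ f : J → J → J → ℝ,
      (∑ u, ∑ p, ∑ k, f k p u) = ∑ u, ∑ p, ∑ k, f u p k := by
    intro f
    calc (∑ u, ∑ p, ∑ k, f k p u) = ∑ p, ∑ u, ∑ k, f k p u := Finset.sum_comm
      _ = ∑ p, ∑ k, ∑ u, f k p u := Finset.sum_congr rfl fun p _ => Finset.sum_comm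
      _ = ∑ k, ∑ p, ∑ u, f k p u := Finset.sum_comm
  have hT : ∀ r : R, (∑ u, ∑ p, ∑ k, γ r k p * γ r k u * B p u)
      = ∑ u, ∑ p, ∑ q, γ r p u * γ r q u * B p q := by
    intro r
    have step1 : (∑ u, ∑ p, ∑ k, γ r k p * γ r k u * B p u)
        = ∑ u, ∑ p, ∑ k, γ r p k * γ r u k * B p u := by
      refine Finset.sum_congr rfl fun u _ => Finset.sum_congr rfl fun p _ =>
        Finset.sum_congr rfl fun k _ => ?_
      rw [hγ r k p, hγ r k u]; ring
    rw [step1]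
    exact hswap (fun k p u => γ r p k * γ r u k * B p u)
  rw [Finset.sum_add_distrib, Finset.sum_add_distrib]
  have e2 : (∑ u : J, (1 / 2 : ℝ) * ∑ r, ∑ p, ∑ k, γ r k p * γ r k u * B u p)
      = (1 / 2 : ℝ) * ∑ r, ∑ u, ∑ p, ∑ k, γ r k p * γ r k u * B p u := by
    rw [← Finset.mul_sum, Finset.sum_comm]
    congr 1
    exact Finset.sum_congr rfl fun r _ => hT' r
  have e3 : (∑ u : J, (1 / 2 : ℝ) * ∑ r, ∑ p, ∑ k, γ r k p * γ r k u * B p u)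
      = (1 / 2 : ℝ) * ∑ r, ∑ u, ∑ p, ∑ k, γ r k p * γ r k u * B p u := by
    rw [← Finset.mul_sum, Finset.sum_comm]
  have e1 : (∑ u : J, -(∑ r, ∑ p, ∑ q, γ r p u * γ r q u * B p q))
      = -(∑ r, ∑ u, ∑ p, ∑ k, γ r k p * γ r k u * B p u) := by
    calc (∑ u : J, -(∑ r, ∑ p, ∑ q, γ r p u * γ r q u * B p q))
        = -(∑ u : J, ∑ r, ∑ p, ∑ q, γ r p u * γ r q u * B p q) := by
          simp [Finset.sum_neg_distrib]
      _ = -(∑ r, ∑ u : J, ∑ p, ∑ q, γ r p u * γ r q u * B p q) := by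
          rw [Finset.sum_comm]
      _ = -(∑ r, ∑ u, ∑ p, ∑ k, γ r k p * γ r k u * B p u) :=
          congrArg Neg.neg (Finset.sum_congr rfl fun r _ => (hT r).symm)
  rw [e1, e2, e3]
  ring

/-- for `J = J₁ ⊕ J₂`, a bijection `F : J₁ ≃ J₂`, structure constants
`Γ` satisfying `Γ_{rs}^u = -Γ_{ru}^s`, `Γ_{r,F(i)}^{F(k)} = Γ_{ri}^k` and vanishing of
the mixed terms, and a symmetric matrix `A`, the trace-type sum over `u ∈ J₁`
vanishes. -/
theorem equivalent_modules_sum_cancellation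
    {I J₁ J₂ : Type*} [Fintype I] [Fintype J₁] [Fintype J₂]
    (F : J₁ ≃ J₂)
    (Γ : I → (J₁ ⊕ J₂) → (J₁ ⊕ J₂) → ℝ)
    (h1 : ∀ (r : I) (s u : J₁ ⊕ J₂), Γ r s u = -Γ r u s)
    (h2 : ∀ (r : I) (i k : J₁), Γ r (Sum.inr (F i)) (Sum.inr (F k)) = Γ r (Sum.inl i) (Sum.inl k))
    (h3 : ∀ (r : I) (i k : J₁), Γ r (Sum.inr (F i)) (Sum.inl k) = 0)
    (h4 : ∀ (r : I) (i k : J₁), Γ r (Sum.inl i) (Sum.inr (F k)) = 0)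
    (A : (J₁ ⊕ J₂) → (J₁ ⊕ J₂) → ℝ)
    (hA : ∀ p q, A p q = A q p) :
    ∑ u : J₁,
      (-(∑ r, ∑ p, ∑ q, Γ r p (Sum.inl u) * Γ r q (Sum.inr (F u)) * A p q)
        + (1 / 2 : ℝ) * ∑ r, ∑ p, ∑ k, Γ r k p * Γ r k (Sum.inr (F u)) * A p (Sum.inl u)
        + (1 / 2 : ℝ) * ∑ r, ∑ p, ∑ k, Γ r k p * Γ r k (Sum.inl u) * A p (Sum.inr (F u)))
      = 0 := by
  have h3' : ∀ (r : I) (j : J₂) (k : J₁), Γ r (Sum.inr j) (Sum.inl k) = 0 := fun r j k => by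
    simpa using h3 r (F.symm j) k
  have h4' : ∀ (r : I) (i : J₁) (j : J₂), Γ r (Sum.inl i) (Sum.inr j) = 0 := fun r i j => by
    simpa using h4 r i (F.symm j)
  have h2' : ∀ (r : I) (j j' : J₂),
      Γ r (Sum.inr j) (Sum.inr j') = Γ r (Sum.inl (F.symm j)) (Sum.inl (F.symm j')) := by
    intro r j j'
    simpa using h2 r (F.symm j) (F.symm j')
  -- reduce term 1
  have e1 : ∀ (r : I) (u : J₁),
      (∑ p, ∑ q, Γ r p (Sum.inl u) * Γ r q (Sum.inr (F u)) * A p q)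
      = ∑ p : J₁, ∑ q : J₁, Γ r (Sum.inl p) (Sum.inl u) * Γ r (Sum.inl q) (Sum.inl u)
          * A (Sum.inl p) (Sum.inr (F q)) := by
    intro r u
    rw [Fintype.sum_sum_type]
    simp only [h3', zero_mul, Finset.sum_const_zero, add_zero]
    refine Finset.sum_congr rfl fun p _ => ?_
    rw [Fintype.sum_sum_type]
    simp only [h4', mul_zero, zero_mul, Finset.sum_const_zero, zero_add]
    refine Fintype.sum_equiv F.symm _ _ fun j => ?_
    rw [h2', F.symm_apply_apply]
    simp
  -- reduce term 2
  have e2 : ∀ (r : I) (u : J₁),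
      (∑ p, ∑ k, Γ r k p * Γ r k (Sum.inr (F u)) * A p (Sum.inl u))
      = ∑ p : J₁, ∑ k : J₁, Γ r (Sum.inl k) (Sum.inl p) * Γ r (Sum.inl k) (Sum.inl u)
          * A (Sum.inl u) (Sum.inr (F p)) := by
    intro r u
    simp only [Fintype.sum_sum_type]
    simp only [h3', h4', zero_mul, mul_zero, Finset.sum_const_zero, add_zero, zero_add]
    refine Fintype.sum_equiv F.symm _ _ fun j => ?_
    refine Fintype.sum_equiv F.symm _ _ fun j' => ?_
    rw [h2' r j' j, h2' r j' (F u), F.symm_apply_apply, hA (Sum.inr j) (Sum.inl u),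
      F.apply_symm_apply]
  -- reduce term 3
  have e3 : ∀ (r : I) (u : J₁),
      (∑ p, ∑ k, Γ r k p * Γ r k (Sum.inl u) * A p (Sum.inr (F u)))
      = ∑ p : J₁, ∑ k : J₁, Γ r (Sum.inl k) (Sum.inl p) * Γ r (Sum.inl k) (Sum.inl u)
          * A (Sum.inl p) (Sum.inr (F u)) := by
    intro r u
    simp only [Fintype.sum_sum_type]
    simp only [h3', h4', zero_mul, mul_zero, Finset.sum_const_zero, add_zero, zero_add]
  have key := aux_sum_cancel (fun r i k => Γ r (Sum.inl i) (Sum.inl k))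
    (fun r i k => h1 r (Sum.inl i) (Sum.inl k))
    (fun p q => A (Sum.inl p) (Sum.inr (F q)))
  calc ∑ u : J₁,
      (-(∑ r, ∑ p, ∑ q, Γ r p (Sum.inl u) * Γ r q (Sum.inr (F u)) * A p q)
        + (1 / 2 : ℝ) * ∑ r, ∑ p, ∑ k, Γ r k p * Γ r k (Sum.inr (F u)) * A p (Sum.inl u)
        + (1 / 2 : ℝ) * ∑ r, ∑ p, ∑ k, Γ r k p * Γ r k (Sum.inl u) * A p (Sum.inr (F u)))
      = ∑ u : J₁,
      (-(∑ r, ∑ p : J₁, ∑ q : J₁, Γ r (Sum.inl p) (Sum.inl u) * Γ r (Sum.inl q) (Sum.inl u)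
            * A (Sum.inl p) (Sum.inr (F q)))
        + (1 / 2 : ℝ) * ∑ r, ∑ p : J₁, ∑ k : J₁, Γ r (Sum.inl k) (Sum.inl p)
            * Γ r (Sum.inl k) (Sum.inl u) * A (Sum.inl u) (Sum.inr (F p))
        + (1 / 2 : ℝ) * ∑ r, ∑ p : J₁, ∑ k : J₁, Γ r (Sum.inl k) (Sum.inl p)
            * Γ r (Sum.inl k) (Sum.inl u) * A (Sum.inl p) (Sum.inr (F u))) := by
        refine Finset.sum_congr rfl fun u _ => ?_
        rw [Finset.sum_congr rfl fun r _ => e1 r u,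
            Finset.sum_congr rfl fun r _ => e2 r u,
            Finset.sum_congr rfl fun r _ => e3 r u]
    _ = 0 := key
end
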